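/- arXiv:1706.03690 — 5 statements merged into one kernel-verified Lean document; each statement's English description precedes it below -/
import Mathlib

section
/- Let A be a C*-algebra and let I, J be closed two-sided ideals of A. Then I is compactly contained in J if and only if there exist a positive element a ∈ J and ε > 0 such that I ⊆ closure(A(a−ε)₊A). In particular, for every positive element a ∈ A and every ε > 0, the ideal closure(A(a−ε)₊A) is compactly contained in closure(AaA). -/
open Filter Topology Set

universe u v

section IdealPrelim

variable (A : Type u) [AddCommGroup A] [Mul A] [TopologicalSpace A]

/-- A closed two-sided ideal of the C*-algebra `A`. -/
structure ClosedIdeal where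
  carrier : Set A
  zero_mem' : (0 : A) ∈ carrier
  add_mem' : ∀ {x y : A}, x ∈ carrier → y ∈ carrier → x + y ∈ carrier
  neg_mem' : ∀ {x : A}, x ∈ carrier → -x ∈ carrier
  mul_mem_left' : ∀ (a : A) {x : A}, x ∈ carrier → a * x ∈ carrier
  mul_mem_right' : ∀ (a : A) {x : A}, x ∈ carrier → x * a ∈ carrier
  isClosed' : IsClosed carrier

variable {A}

instance : SetLike (ClosedIdeal A) A where
  coe := ClosedIdeal.carrier
  coe_injective := fun I J h => by cases I; cases J; congr

/-- The smallest closed two-sided ideal containing a subset `S`;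
`closedIdealGen {a}` is the closed two-sided ideal generated by `a`,
i.e. `closure (A a A)` in the C*-algebra setting. -/
def closedIdealGen (S : Set A) : ClosedIdeal A where
  carrier := ⋂ I ∈ {I : ClosedIdeal A | S ⊆ I.carrier}, I.carrier
  zero_mem' := Set.mem_iInter₂.mpr fun I _ => I.zero_mem'
  add_mem' := fun hx hy => Set.mem_iInter₂.mpr fun I hI =>
    I.add_mem' (Set.mem_iInter₂.mp hx I hI) (Set.mem_iInter₂.mp hy I hI)
  neg_mem' := fun hx => Set.mem_iInter₂.mpr fun I hI =>
    I.neg_mem' (Set.mem_iInter₂.mp hx I hI)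
  mul_mem_left' := fun a _ hx => Set.mem_iInter₂.mpr fun I hI =>
    I.mul_mem_left' a (Set.mem_iInter₂.mp hx I hI)
  mul_mem_right' := fun a _ hx => Set.mem_iInter₂.mpr fun I hI =>
    I.mul_mem_right' a (Set.mem_iInter₂.mp hx I hI)
  isClosed' := isClosed_biInter fun I _ => I.isClosed'

/-- The zero ideal, i.e. the bottom element of the ideal lattice. -/
def zeroIdeal : ClosedIdeal A := closedIdealGen (∅ : Set A)

/-- The sum `I + J` of two closed two-sided ideals (which, in a C*-algebra, is
the closed two-sided ideal generated by `I ∪ J`). -/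
def idealSum (I J : ClosedIdeal A) : ClosedIdeal A :=
  closedIdealGen ((I : Set A) ∪ (J : Set A))

/-- The set of finite sums `x = Σ_{l ∈ s} f l` with `f l ∈ F l`, over a fixed finite
index set `s`.  -/
def partialIdealSum {Λ : Type u} (F : Λ → ClosedIdeal A) (s : Finset Λ) : Set A :=
  { x : A | ∃ f : Λ → A, (∀ l ∈ s, f l ∈ F l) ∧ x = ∑ l ∈ s, f l }

/-- The algebraic sum `Σ_λ I_λ` of a family of closed two-sided ideals: all finite sums of
elements of the ideals. -/
def idealFamilySum {Λ : Type u} (F : Λ → ClosedIdeal A) : Set A :=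
  { x : A | ∃ s : Finset Λ, x ∈ partialIdealSum F s }

/-- `I` is compactly contained in `J`, written `I ⋐ J`: whenever `J` is contained in the
closure of the sum of a family of closed two-sided ideals, `I` is contained in the sum of
finitely many members of the family. -/
def CompactlyContained (I J : ClosedIdeal A) : Prop :=
  ∀ {Λ : Type u} (F : Λ → ClosedIdeal A),
    (J : Set A) ⊆ closure (idealFamilySum F) →
    ∃ s : Finset Λ, (I : Set A) ⊆ partialIdealSum F s

end IdealPrelim

section Positive

variable {A : Type u} [Mul A] [Star A]

/-- An element of a C*-algebra is positive iff it is of the form `b* b`. -/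
def IsPositiveElem (a : A) : Prop := ∃ b : A, a = star b * b

end Positive

section CuMorphism

variable {A : Type u} {B : Type v} [AddCommGroup A] [Mul A] [TopologicalSpace A]
  [AddCommGroup B] [Mul B] [TopologicalSpace B]

/-- A generalised Cu-morphism between ideal lattices: preserves `0`, addition, order and
suprema of increasing nets (the supremum of an increasing net of ideals being the closed
ideal generated by the union, i.e. the closure of the union). -/
def IsGenCuMorphism (Φ : ClosedIdeal A → ClosedIdeal B) : Prop :=
  Φ zeroIdeal = zeroIdeal ∧
  (∀ I J : ClosedIdeal A, Φ (idealSum I J) = idealSum (Φ I) (Φ J)) ∧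
  (∀ I J : ClosedIdeal A, (I : Set A) ⊆ (J : Set A) → (Φ I : Set B) ⊆ (Φ J : Set B)) ∧
  (∀ (Λ : Type u) (_ : Preorder Λ) (_ : IsDirected Λ (· ≤ ·)) (_ : Nonempty Λ),
    ∀ (F : Λ → ClosedIdeal A), Monotone (fun l => (F l : Set A)) →
      Φ (closedIdealGen (⋃ l, (F l : Set A))) = closedIdealGen (⋃ l, (Φ (F l) : Set B)))

/-- A Cu-morphism is a generalised Cu-morphism preserving compact containment. -/
def IsCuMorphism (Φ : ClosedIdeal A → ClosedIdeal B) : Prop :=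
  IsGenCuMorphism Φ ∧
  ∀ I J : ClosedIdeal A, CompactlyContained I J → CompactlyContained (Φ I) (Φ J)

/-- The map induced on ideal lattices by a map of C*-algebras:
`I(φ)(I)` is the closed two-sided ideal generated by the image `φ(I)`
(that is, `closure (B φ(I) B)`). -/
def idealMap (f : A → B) (I : ClosedIdeal A) : ClosedIdeal B :=
  closedIdealGen (f '' (I : Set A))

end CuMorphism

section AuxIdeal

variable {A : Type u} [AddCommGroup A] [Mul A] [TopologicalSpace A]

lemma subset_closedIdealGen {S : Set A} : S ⊆ (closedIdealGen S : Set A) := by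
  intro x hx
  exact Set.mem_iInter₂.mpr fun I hI => hI hx

lemma closedIdealGen_subset {S : Set A} {I : ClosedIdeal A} (h : S ⊆ (I : Set A)) :
    (closedIdealGen S : Set A) ⊆ (I : Set A) := by
  intro x hx
  exact Set.mem_iInter₂.mp hx I h

lemma mem_closedIdealGen_self {a : A} : a ∈ closedIdealGen {a} :=
  subset_closedIdealGen rfl

end AuxIdeal

section AuxOrder

open Unitization in
/-- The canonical partial order on a non-unital C⋆-algebra, pulled back from the
spectral order on its unitization. -/
@[reducible] noncomputable def cstarPO (A : Type u) [NonUnitalCStarAlgebra A] : PartialOrder A :=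
  letI : PartialOrder (Unitization ℂ A) := CStarAlgebra.spectralOrder _
  { le := fun a b => (a : Unitization ℂ A) ≤ b
    le_refl := fun a => le_refl ((a : Unitization ℂ A))
    le_trans := fun _ _ _ hab hbc => le_trans (α := Unitization ℂ A) hab hbc
    le_antisymm := fun a b hab hba => by
      have := le_antisymm (α := Unitization ℂ A) hab hba
      exact Unitization.inr_injective (R := ℂ) this }

open Unitization in
lemma cstarSOR (A : Type u) [NonUnitalCStarAlgebra A] :
    @StarOrderedRing A inferInstance (cstarPO A) inferInstance := by
  letI := cstarPO A
  letI : PartialOrder (Unitization ℂ A) := CStarAlgebra.spectralOrder _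
  haveI := CStarAlgebra.spectralOrderedRing (Unitization ℂ A)
  refine StarOrderedRing.of_le_iff fun a b => ?_
  constructor
  · intro hab
    have hab' : (a : Unitization ℂ A) ≤ (b : Unitization ℂ A) := hab
    have hsa' : IsSelfAdjoint ((b : Unitization ℂ A) - (a : Unitization ℂ A)) := hab'.1
    rw [← Unitization.inr_sub ℂ b a] at hsa'
    have hsa : IsSelfAdjoint (b - a) := by
      have := hsa'.star_eq
      rw [← Unitization.inr_star] at this
      exact Unitization.inr_injective (R := ℂ) this
    have hσ : ∀ x ∈ quasispectrum ℝ (b - a), 0 ≤ x := by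
      have h2 := hab'.2
      rw [Unitization.quasispectrum_eq_spectrum_inr' ℝ ℂ (b - a)]
      intro x hx
      rw [Unitization.inr_sub ℂ b a] at hx
      exact (SpectrumRestricts.nnreal_iff.mp h2) x hx
    refine ⟨cfcₙ Real.sqrt (b - a), ?_⟩
    have hstar : star (cfcₙ Real.sqrt (b - a)) = cfcₙ Real.sqrt (b - a) :=
      (cfcₙ_predicate Real.sqrt (b - a) : IsSelfAdjoint _).star_eq
    have hsqrt : cfcₙ Real.sqrt (b - a) * cfcₙ Real.sqrt (b - a) = b - a := by
      calc cfcₙ Real.sqrt (b - a) * cfcₙ Real.sqrt (b - a)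
          = cfcₙ (fun x => Real.sqrt x * Real.sqrt x) (b - a) :=
            (cfcₙ_mul Real.sqrt Real.sqrt (b - a)
              (Real.continuous_sqrt.continuousOn) Real.sqrt_zero
              (Real.continuous_sqrt.continuousOn) Real.sqrt_zero).symm
        _ = cfcₙ (id : ℝ → ℝ) (b - a) :=
            cfcₙ_congr fun x hx => Real.mul_self_sqrt (hσ x hx)
        _ = b - a := cfcₙ_id ℝ (b - a) hsa
    rw [hstar, hsqrt]
    abel
  · rintro ⟨s, rfl⟩
    show (a : Unitization ℂ A) ≤ ((a + star s * s : A) : Unitization ℂ A)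
    rw [Unitization.inr_add, Unitization.inr_mul, Unitization.inr_star]
    exact le_add_of_nonneg_right (star_mul_self_nonneg _)

end AuxOrder
section AuxFun

/-- The cut-down function `t ↦ (t - ε)₊`. -/
noncomputable def fcut (ε : ℝ) : ℝ → ℝ := fun t => max (t - ε) 0

/-- A continuous bump: `0` on `(-∞, δ]`, `1` on `[2δ, ∞)`, linear in between. -/
noncomputable def gbump (δ : ℝ) : ℝ → ℝ := fun t => min (max (t - δ) 0 / δ) 1

lemma continuous_fcut (ε : ℝ) : Continuous (fcut ε) :=
  (continuous_id.sub continuous_const).max continuous_const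

lemma fcut_zero {ε : ℝ} (hε : 0 ≤ ε) : fcut ε 0 = 0 := by
  simp only [fcut, zero_sub]
  exact max_eq_right (by linarith)

lemma fcut_nonneg (ε t : ℝ) : 0 ≤ fcut ε t := le_max_right _ _

lemma fcut_eq_zero {ε t : ℝ} (h : t ≤ ε) : fcut ε t = 0 :=
  max_eq_right (by linarith)

lemma continuous_gbump (δ : ℝ) : Continuous (gbump δ) :=
  (((continuous_id.sub continuous_const).max continuous_const).div_const δ).min continuous_const

lemma gbump_zero {δ : ℝ} (hδ : 0 < δ) : gbump δ 0 = 0 := by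
  simp only [gbump, zero_sub]
  rw [max_eq_right (by linarith), zero_div]
  exact min_eq_left zero_le_one

lemma gbump_eq_zero {δ t : ℝ} (h : t ≤ δ) : gbump δ t = 0 := by
  simp only [gbump]
  rw [max_eq_right (by linarith), zero_div]
  exact min_eq_left zero_le_one

lemma gbump_nonneg {δ : ℝ} (hδ : 0 < δ) (t : ℝ) : 0 ≤ gbump δ t :=
  le_min (div_nonneg (le_max_right _ _) hδ.le) zero_le_one

lemma gbump_le_one (δ t : ℝ) : gbump δ t ≤ 1 := min_le_right _ _

lemma gbump_eq_one {δ t : ℝ} (hδ : 0 < δ) (h : 2 * δ ≤ t) : gbump δ t = 1 := by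
  simp only [gbump]
  rw [max_eq_left (by linarith)]
  exact min_eq_right <| (one_le_div hδ).mpr (by linarith)

end AuxFun

section AuxCFC

set_option linter.unusedSectionVars false

variable {A : Type u} [NonUnitalCStarAlgebra A] [PartialOrder A] [StarOrderedRing A]

lemma cfcₙ_mul' {f g : ℝ → ℝ} (a : A) (hf : Continuous f) (hf0 : f 0 = 0)
    (hg : Continuous g) (hg0 : g 0 = 0) :
    cfcₙ (fun t => f t * g t) a = cfcₙ f a * cfcₙ g a :=
  cfcₙ_mul f g a hf.continuousOn hf0 hg.continuousOn hg0

lemma cfcₙ_sub' {f g : ℝ → ℝ} (a : A) (hf : Continuous f) (hf0 : f 0 = 0)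
    (hg : Continuous g) (hg0 : g 0 = 0) :
    cfcₙ (fun t => f t - g t) a = cfcₙ f a - cfcₙ g a :=
  cfcₙ_sub f g a hf.continuousOn hf0 hg.continuousOn hg0

lemma cfcₙ_add' {f g : ℝ → ℝ} (a : A) (hf : Continuous f) (hf0 : f 0 = 0)
    (hg : Continuous g) (hg0 : g 0 = 0) :
    cfcₙ (fun t => f t + g t) a = cfcₙ f a + cfcₙ g a :=
  cfcₙ_add f g a hf.continuousOn hf0 hg.continuousOn hg0

lemma norm_cfcₙ_le' {f : ℝ → ℝ} {a : A} {c : ℝ} (h : ∀ x ∈ quasispectrum ℝ a, |f x| ≤ c) :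
    ‖cfcₙ f a‖ ≤ c :=
  norm_cfcₙ_le (by simpa [Real.norm_eq_abs] using h)

lemma norm_le_sqrt_of_sq {c : A} {r : ℝ} (h : ‖c‖ * ‖c‖ ≤ r) : ‖c‖ ≤ Real.sqrt r := by
  have := Real.sqrt_le_sqrt h
  rwa [Real.sqrt_mul_self (norm_nonneg c)] at this

/-- The square root of a nonneg element, squared. -/
lemma sqrt_mul_self_eq {b : A} (hb : 0 ≤ b) :
    cfcₙ Real.sqrt b * cfcₙ Real.sqrt b = b := by
  calc cfcₙ Real.sqrt b * cfcₙ Real.sqrt b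
      = cfcₙ (fun x => Real.sqrt x * Real.sqrt x) b :=
        (cfcₙ_mul' b Real.continuous_sqrt Real.sqrt_zero Real.continuous_sqrt Real.sqrt_zero).symm
    _ = cfcₙ (id : ℝ → ℝ) b :=
        cfcₙ_congr fun x hx => Real.mul_self_sqrt (quasispectrum_nonneg_of_nonneg b hb x hx)
    _ = b := cfcₙ_id ℝ b (.of_nonneg hb)

lemma isPositiveElem_iff_nonneg {a : A} : IsPositiveElem a ↔ 0 ≤ a := by
  constructor
  · rintro ⟨b, rfl⟩
    exact star_mul_self_nonneg b
  · intro ha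
    refine ⟨cfcₙ Real.sqrt a, ?_⟩
    rw [(cfcₙ_predicate Real.sqrt a : IsSelfAdjoint _).star_eq, sqrt_mul_self_eq ha]

/-- Factorization membership: if `f = g * h` pointwise and `cfcₙ h a ∈ I`,
then `cfcₙ f a ∈ I`. -/
lemma cfc_factor_mem {I : ClosedIdeal A} {a : A} {f g h : ℝ → ℝ}
    (hfgh : ∀ t, f t = g t * h t)
    (hg : Continuous g) (hg0 : g 0 = 0) (hh : Continuous h) (hh0 : h 0 = 0)
    (hmem : cfcₙ h a ∈ I.carrier) : cfcₙ f a ∈ I.carrier := by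
  have : cfcₙ f a = cfcₙ g a * cfcₙ h a := by
    rw [← cfcₙ_mul' a hg hg0 hh hh0]
    exact cfcₙ_congr fun t _ => hfgh t
  rw [this]
  exact I.mul_mem_left' _ hmem

/-- If `f t = t * k t` with `k` continuous vanishing at zero, and `a ∈ I` is selfadjoint,
then `cfcₙ f a ∈ I`. -/
lemma cfc_mem_of_mem {I : ClosedIdeal A} {a : A} (ha : a ∈ I.carrier) (hsa : IsSelfAdjoint a)
    {f k : ℝ → ℝ} (hk : Continuous k) (hk0 : k 0 = 0) (hfk : ∀ t, f t = t * k t) :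
    cfcₙ f a ∈ I.carrier := by
  have h1 : cfcₙ (fun t : ℝ => t * k t) a = cfcₙ (fun t : ℝ => t) a * cfcₙ k a :=
    cfcₙ_mul' a continuous_id rfl hk hk0
  rw [cfcₙ_id' ℝ a hsa] at h1
  have : cfcₙ f a = a * cfcₙ k a := by
    rw [← h1]
    exact cfcₙ_congr fun t _ => hfk t
  rw [this]
  exact I.mul_mem_right' _ ha

lemma gbump_mem_of_mem {I : ClosedIdeal A} {a : A} (ha : a ∈ I.carrier)
    (hsa : IsSelfAdjoint a) {δ : ℝ} (hδ : 0 < δ) :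
    cfcₙ (gbump δ) a ∈ I.carrier := by
  refine cfc_mem_of_mem ha hsa (k := fun t => gbump δ t / max t δ)
    ((continuous_gbump δ).div (continuous_id.max continuous_const)
      fun t => (lt_max_of_lt_right hδ).ne')
    (show gbump δ 0 / max 0 δ = 0 by rw [gbump_zero hδ, zero_div]) fun t => ?_
  show gbump δ t = t * (gbump δ t / max t δ)
  rcases le_or_gt t δ with h | h
  · rw [gbump_eq_zero h, zero_div, mul_zero]
  · rw [max_eq_left h.le, mul_comm, div_mul_cancel₀ _ (ne_of_gt (hδ.trans h))]

lemma gbump_mem_gen (a : A) {δ : ℝ} (hδ : 0 < δ) :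
    cfcₙ (gbump δ) a ∈ (closedIdealGen {cfcₙ (fcut (δ/2)) a}).carrier := by
  refine cfc_factor_mem (g := fun t => gbump δ t / max (t - δ/2) (δ/2)) (h := fcut (δ/2))
    (fun t => ?_)
    ((continuous_gbump δ).div ((continuous_id.sub continuous_const).max continuous_const)
      fun t => (lt_max_of_lt_right (by linarith)).ne')
    (show gbump δ 0 / max (0 - δ/2) (δ/2) = 0 by rw [gbump_zero hδ, zero_div])
    (continuous_fcut _) (fcut_zero (by linarith))
    mem_closedIdealGen_self
  show gbump δ t = gbump δ t / max (t - δ/2) (δ/2) * fcut (δ/2) t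
  rcases le_or_gt t δ with h | h
  · rw [gbump_eq_zero h, zero_div, zero_mul]
  · have hf : fcut (δ/2) t = t - δ/2 := max_eq_left (by linarith)
    rw [max_eq_left (by linarith), hf, div_mul_cancel₀ _ (ne_of_gt (by linarith : (0:ℝ) < t - δ/2))]

end AuxCFC
section AuxPsi

set_option linter.unusedSectionVars false

variable {A : Type u} [NonUnitalCStarAlgebra A] [PartialOrder A] [StarOrderedRing A]

/-- The fundamental identity `Ψ_q(a) = cfcₙ (t (1 - q t)²) a` for selfadjoint `a`. -/
lemma psi_eq (a : A) (ha : IsSelfAdjoint a) (q : ℝ → ℝ) (hq : Continuous q) (hq0 : q 0 = 0) :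
    a - cfcₙ q a * a - a * cfcₙ q a + cfcₙ q a * (a * cfcₙ q a)
      = cfcₙ (fun t => t * (1 - q t)^2) a := by
  have hid : cfcₙ (fun t : ℝ => t) a = a := cfcₙ_id' ℝ a ha
  have e1 : cfcₙ (fun t : ℝ => q t * t) a = cfcₙ q a * a := by
    rw [cfcₙ_mul' a hq hq0 continuous_id' rfl, hid]
  have e2 : cfcₙ (fun t : ℝ => t * q t) a = a * cfcₙ q a := by
    rw [cfcₙ_mul' a continuous_id' rfl hq hq0, hid]
  have e3 : cfcₙ (fun t : ℝ => q t * (t * q t)) a = cfcₙ q a * (a * cfcₙ q a) := by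
    rw [cfcₙ_mul' (g := fun t => t * q t) a hq hq0 (continuous_id'.mul hq) (by simp [hq0]), e2]
  have split : cfcₙ (fun t : ℝ => t - q t * t - t * q t + q t * (t * q t)) a
      = cfcₙ (fun t : ℝ => t) a - cfcₙ (fun t : ℝ => q t * t) a
        - cfcₙ (fun t : ℝ => t * q t) a + cfcₙ (fun t : ℝ => q t * (t * q t)) a := by
    rw [cfcₙ_add' (f := fun t => t - q t * t - t * q t) (g := fun t => q t * (t * q t)) a (((continuous_id'.sub (hq.mul continuous_id')).sub (continuous_id'.mul hq)))
        (by simp [hq0]) (hq.mul (continuous_id'.mul hq)) (by simp [hq0]),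
      cfcₙ_sub' (f := fun t => t - q t * t) (g := fun t => t * q t) a (continuous_id'.sub (hq.mul continuous_id')) (by simp [hq0])
        (continuous_id'.mul hq) (by simp [hq0]),
      cfcₙ_sub' (f := fun t => t) (g := fun t => q t * t) a continuous_id' rfl (hq.mul continuous_id') (by simp [hq0])]
  calc a - cfcₙ q a * a - a * cfcₙ q a + cfcₙ q a * (a * cfcₙ q a)
      = cfcₙ (fun t : ℝ => t) a - cfcₙ (fun t : ℝ => q t * t) a
        - cfcₙ (fun t : ℝ => t * q t) a + cfcₙ (fun t : ℝ => q t * (t * q t)) a := by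
        rw [hid, e1, e2, e3]
    _ = cfcₙ (fun t : ℝ => t - q t * t - t * q t + q t * (t * q t)) a := split.symm
    _ = cfcₙ (fun t => t * (1 - q t)^2) a := cfcₙ_congr fun t _ => by ring

lemma psi_expand {w u : A} (hw : IsSelfAdjoint w) (hu : IsSelfAdjoint u) :
    star (w - w * u) * (w - w * u)
      = w * w - u * (w * w) - (w * w) * u + u * ((w * w) * u) := by
  rw [star_sub, star_mul, hw.star_eq, hu.star_eq]
  noncomm_ring

lemma psi_expand' (x : A) {u : A} (hu : IsSelfAdjoint u) :
    (x - u * x) * star (x - u * x)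
      = x * star x - u * (x * star x) - (x * star x) * u + u * ((x * star x) * u) := by
  rw [star_sub, star_mul, hu.star_eq]
  noncomm_ring

/-- The key norm estimate for `Ψ_{g_δ}(a)` with `a ≥ 0`. -/
lemma psi_gbump_norm_le {a : A} (ha : 0 ≤ a) {δ : ℝ} (hδ : 0 < δ) :
    ‖a - cfcₙ (gbump δ) a * a - a * cfcₙ (gbump δ) a
      + cfcₙ (gbump δ) a * (a * cfcₙ (gbump δ) a)‖ ≤ 2 * δ := by
  rw [psi_eq a (.of_nonneg ha) _ (continuous_gbump δ) (gbump_zero hδ)]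
  refine norm_cfcₙ_le' fun t ht => ?_
  have ht0 : 0 ≤ t := quasispectrum_nonneg_of_nonneg a ha t ht
  have hg0 := gbump_nonneg hδ t
  have hg1 := gbump_le_one δ t
  rcases le_or_gt t (2*δ) with h | h
  · have h1 : 0 ≤ (1 - gbump δ t)^2 := sq_nonneg _
    have h2 : (1 - gbump δ t)^2 ≤ 1 := by nlinarith
    rw [abs_of_nonneg (by positivity)]
    nlinarith
  · rw [gbump_eq_one hδ h.le]
    simp only [sub_self]
    rw [show ((0:ℝ))^2 = 0 by ring, mul_zero, abs_zero]
    positivity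

/-- Any closed ideal is closed under `star`. -/
lemma star_mem_closedIdeal {I : ClosedIdeal A} {x : A} (hx : x ∈ I.carrier) :
    star x ∈ I.carrier := by
  have hclosed := I.isClosed'
  rw [← hclosed.closure_eq]
  rw [Metric.mem_closure_iff]
  intro η hη
  set a := x * star x with hadef
  have ha : a ∈ I.carrier := I.mul_mem_right' (star x) hx
  have ha0 : 0 ≤ a := mul_star_self_nonneg x
  set δ := η^2 / 4 with hδdef
  have hδ : 0 < δ := by positivity
  set u := cfcₙ (gbump δ) a with hudef
  have husa : IsSelfAdjoint u := cfcₙ_predicate _ a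
  have humem : u ∈ I.carrier := gbump_mem_of_mem ha (.of_nonneg ha0) hδ
  refine ⟨star x * u, I.mul_mem_left' (star x) humem, ?_⟩
  rw [dist_eq_norm]
  have key : star x - star x * u = star (x - u * x) := by
    rw [star_sub, star_mul, husa.star_eq]
  rw [key, norm_star]
  have hsq : ‖x - u * x‖ * ‖x - u * x‖ ≤ 2 * δ := by
    rw [← CStarRing.norm_self_mul_star (x := x - u * x)]
    rw [psi_expand' x husa]
    exact psi_gbump_norm_le ha0 hδ
  have := norm_le_sqrt_of_sq hsq
  have h24 : Real.sqrt (2 * δ) < η := by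
    have h1 : 2 * δ < η^2 := by rw [hδdef]; nlinarith
    calc Real.sqrt (2*δ) < Real.sqrt (η^2) := Real.sqrt_lt_sqrt (by positivity) h1
      _ = η := Real.sqrt_sq hη.le
  linarith

end AuxPsi
section AuxMore

set_option linter.unusedSectionVars false

variable {A : Type u} [NonUnitalCStarAlgebra A] [PartialOrder A] [StarOrderedRing A]

lemma sqrt_est {η : ℝ} (hη : 0 < η) : Real.sqrt (2 * (η^2/4)) < η := by
  have h1 : 2 * (η^2/4) < η^2 := by nlinarith
  calc Real.sqrt (2 * (η^2/4)) < Real.sqrt (η^2) := Real.sqrt_lt_sqrt (by positivity) h1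
    _ = η := Real.sqrt_sq hη.le

lemma norm_sub_gbump_mul (x : A) {δ : ℝ} (hδ : 0 < δ) :
    ‖x - cfcₙ (gbump δ) (x * star x) * x‖ ≤ Real.sqrt (2 * δ) := by
  have ha0 : 0 ≤ x * star x := mul_star_self_nonneg x
  have husa : IsSelfAdjoint (cfcₙ (gbump δ) (x * star x)) := cfcₙ_predicate _ _
  refine norm_le_sqrt_of_sq ?_
  rw [← CStarRing.norm_self_mul_star, psi_expand' x husa]
  exact psi_gbump_norm_le ha0 hδ

lemma smul_mem_closedIdeal {I : ClosedIdeal A} (r : ℝ) {x : A} (hx : x ∈ I.carrier) :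
    r • x ∈ I.carrier := by
  rw [← I.isClosed'.closure_eq, Metric.mem_closure_iff]
  intro η hη
  set δ := (η / (|r| + 1))^2 / 4 with hδdef
  have hr1 : (0:ℝ) < |r| + 1 := by positivity
  have hδ : 0 < δ := by positivity
  set u := cfcₙ (gbump δ) (x * star x) with hudef
  have ha : x * star x ∈ I.carrier := I.mul_mem_right' _ hx
  have hasa : IsSelfAdjoint (x * star x) := .of_nonneg (mul_star_self_nonneg x)
  have hmem2 : cfcₙ (fun t => r * gbump δ t) (x * star x) ∈ I.carrier := by
    refine cfc_mem_of_mem ha hasa (k := fun t => r * (gbump δ t / max t δ))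
      (continuous_const.mul ((continuous_gbump δ).div (continuous_id.max continuous_const)
        fun t => (lt_max_of_lt_right hδ).ne'))
      (show r * (gbump δ 0 / max 0 δ) = 0 by rw [gbump_zero hδ, zero_div, mul_zero])
      fun t => ?_
    show r * gbump δ t = t * (r * (gbump δ t / max t δ))
    rcases le_or_gt t δ with h | h
    · simp [gbump_eq_zero h]
    · rw [max_eq_left h.le,
        show t * (r * (gbump δ t / t)) = r * (gbump δ t / t * t) by ring,
        div_mul_cancel₀ _ (ne_of_gt (hδ.trans h))]
  have heq : cfcₙ (fun t => r * gbump δ t) (x * star x) = r • u :=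
    cfcₙ_const_mul r (gbump δ) _ (continuous_gbump δ).continuousOn (gbump_zero hδ)
  refine ⟨(r • u) * x, I.mul_mem_right' x (heq ▸ hmem2), ?_⟩
  rw [dist_eq_norm]
  have hkey : r • x - (r • u) * x = r • (x - u * x) := by
    rw [smul_mul_assoc, smul_sub]
  rw [hkey, norm_smul, Real.norm_eq_abs]
  have hb := (norm_sub_gbump_mul x hδ).trans (sqrt_est (by positivity)).le
  calc |r| * ‖x - u * x‖ ≤ |r| * (η / (|r| + 1)) :=
        mul_le_mul_of_nonneg_left hb (abs_nonneg r)
    _ < η := by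
        rw [mul_div_assoc']
        exact (div_lt_iff₀ hr1).mpr (by nlinarith [abs_nonneg r])

/-- Closed ideals are hereditary: `a ∈ I`, `0 ≤ b ≤ a` implies `b ∈ I`. -/
lemma mem_of_nonneg_of_le_of_mem {I : ClosedIdeal A} {a b : A} (ha : a ∈ I.carrier)
    (hb0 : 0 ≤ b) (hba : b ≤ a) : b ∈ I.carrier := by
  have ha0 : 0 ≤ a := hb0.trans hba
  set r := cfcₙ Real.sqrt b with hrdef
  have hrr : r * r = b := sqrt_mul_self_eq hb0
  have hrsa : IsSelfAdjoint r := cfcₙ_predicate _ b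
  have hrI : r ∈ I.carrier := by
    rw [← I.isClosed'.closure_eq, Metric.mem_closure_iff]
    intro η hη
    set δ := η^2/4 with hδdef
    have hδ : 0 < δ := by positivity
    set u := cfcₙ (gbump δ) a with hudef
    have husa : IsSelfAdjoint u := cfcₙ_predicate _ a
    have humem : u ∈ I.carrier := gbump_mem_of_mem ha (.of_nonneg ha0) hδ
    refine ⟨r * u, I.mul_mem_left' r humem, ?_⟩
    rw [dist_eq_norm]
    have hPsib : star (r - r*u) * (r - r*u) = b - u*b - b*u + u*(b*u) := by
      rw [psi_expand hrsa husa, hrr]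
    have hPsib0 : 0 ≤ b - u*b - b*u + u*(b*u) := hPsib ▸ star_mul_self_nonneg _
    have hw : 0 ≤ a - b := sub_nonneg.mpr hba
    set w := cfcₙ Real.sqrt (a-b) with hwdef
    have hww : w * w = a - b := sqrt_mul_self_eq hw
    have hwsa : IsSelfAdjoint w := cfcₙ_predicate _ _
    have hdiff : (a - u*a - a*u + u*(a*u)) - (b - u*b - b*u + u*(b*u))
        = star (w - w*u) * (w - w*u) := by
      rw [psi_expand hwsa husa, hww]
      noncomm_ring
    have hle : b - u*b - b*u + u*(b*u) ≤ a - u*a - a*u + u*(a*u) := by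
      rw [← sub_nonneg, hdiff]
      exact star_mul_self_nonneg _
    have hnorm : ‖star (r - r*u) * (r - r*u)‖ ≤ 2*δ := by
      rw [hPsib]
      exact (CStarAlgebra.norm_le_norm_of_nonneg_of_le hPsib0 hle).trans (psi_gbump_norm_le ha0 hδ)
    have hc : ‖r - r*u‖ ≤ Real.sqrt (2*δ) := by
      refine norm_le_sqrt_of_sq ?_
      rwa [← CStarRing.norm_star_mul_self]
    exact lt_of_le_of_lt hc (sqrt_est hη)
  exact hrr ▸ I.mul_mem_left' r hrI

lemma fcut_mem_gen_of_le {a : A} {ε₁ ε₂ : ℝ} (h1 : 0 < ε₁) (h12 : ε₁ ≤ ε₂) :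
    cfcₙ (fcut ε₂) a ∈ (closedIdealGen {cfcₙ (fcut ε₁) a}).carrier := by
  rcases eq_or_lt_of_le h12 with rfl | hlt
  · exact mem_closedIdealGen_self
  refine cfc_factor_mem (g := fun t => fcut ε₂ t / max (t - ε₁) (ε₂ - ε₁)) (h := fcut ε₁)
    (fun t => ?_)
    ((continuous_fcut ε₂).div ((continuous_id.sub continuous_const).max continuous_const)
      fun t => (lt_max_of_lt_right (by linarith)).ne')
    (show fcut ε₂ 0 / max (0 - ε₁) (ε₂ - ε₁) = 0 by
      rw [fcut_zero (by linarith), zero_div])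
    (continuous_fcut _) (fcut_zero h1.le) mem_closedIdealGen_self
  show fcut ε₂ t = fcut ε₂ t / max (t - ε₁) (ε₂ - ε₁) * fcut ε₁ t
  rcases le_or_gt t ε₂ with h | h
  · rw [fcut_eq_zero h, zero_div, zero_mul]
  · have hf1 : fcut ε₁ t = t - ε₁ := max_eq_left (by linarith)
    rw [max_eq_left (by linarith), hf1,
      div_mul_cancel₀ _ (ne_of_gt (by linarith : (0:ℝ) < t - ε₁))]

lemma norm_sub_fcut_le {a : A} (ha : 0 ≤ a) {ε : ℝ} (hε : 0 < ε) :
    ‖a - cfcₙ (fcut ε) a‖ ≤ ε := by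
  have h1 : cfcₙ (fun t : ℝ => t - fcut ε t) a = a - cfcₙ (fcut ε) a := by
    rw [cfcₙ_sub' a continuous_id' rfl (continuous_fcut ε) (fcut_zero hε.le),
      cfcₙ_id' ℝ a (.of_nonneg ha)]
  rw [← h1]
  refine norm_cfcₙ_le' fun t ht => ?_
  have ht0 : 0 ≤ t := quasispectrum_nonneg_of_nonneg a ha t ht
  rcases le_or_gt t ε with h | h
  · rw [fcut_eq_zero h, sub_zero, abs_of_nonneg ht0]
    exact h
  · have : fcut ε t = t - ε := max_eq_left (by linarith)
    rw [this]
    rw [show t - (t - ε) = ε by ring, abs_of_nonneg hε.le]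

end AuxMore
section AuxSum

variable {A : Type u} [AddCommGroup A] [Mul A] [TopologicalSpace A]
variable {Λ : Type u} {F : Λ → ClosedIdeal A}

lemma partialIdealSum_zero_mem (s : Finset Λ) : (0:A) ∈ partialIdealSum F s :=
  ⟨fun _ => 0, fun l _ => (F l).zero_mem', by simp⟩

lemma partialIdealSum_mono {s t : Finset Λ} (hst : s ⊆ t) :
    partialIdealSum F s ⊆ partialIdealSum F t := by
  classical
  rintro x ⟨f, hf, rfl⟩
  refine ⟨fun l => if l ∈ s then f l else 0, fun l _ => ?_, ?_⟩
  · by_cases hl : l ∈ s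
    · simpa [hl] using hf l hl
    · dsimp only; rw [if_neg hl]; exact (F l).zero_mem'
  · rw [Finset.sum_ite_mem, Finset.inter_eq_right.mpr hst]

lemma partialIdealSum_add [DecidableEq Λ] {s t : Finset Λ} {x y : A} (hx : x ∈ partialIdealSum F s)
    (hy : y ∈ partialIdealSum F t) : x + y ∈ partialIdealSum F (s ∪ t) := by
  obtain ⟨f, hf, rfl⟩ := hx
  obtain ⟨g, hg, rfl⟩ := hy
  refine ⟨fun l => (if l ∈ s then f l else 0) + (if l ∈ t then g l else 0), fun l _ => ?_, ?_⟩
  · refine (F l).add_mem' ?_ ?_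
    · by_cases hl : l ∈ s
      · rw [if_pos hl]; exact hf l hl
      · simpa [hl] using (F l).zero_mem'
    · by_cases hl : l ∈ t
      · rw [if_pos hl]; exact hg l hl
      · simpa [hl] using (F l).zero_mem'
  · rw [Finset.sum_add_distrib, Finset.sum_ite_mem, Finset.sum_ite_mem,
      Finset.union_inter_cancel_left, Finset.union_inter_cancel_right]

lemma partialIdealSum_sub {s : Finset Λ} {x y : A} (hx : x ∈ partialIdealSum F s)
    (hy : y ∈ partialIdealSum F s) : x - y ∈ partialIdealSum F s := by
  obtain ⟨f, hf, rfl⟩ := hx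
  obtain ⟨g, hg, rfl⟩ := hy
  refine ⟨fun l => f l - g l, fun l hl => ?_, by rw [Finset.sum_sub_distrib]⟩
  show f l - g l ∈ F l
  rw [sub_eq_add_neg]
  exact (F l).add_mem' (hf l hl) ((F l).neg_mem' (hg l hl))

lemma partialIdealSum_neg {s : Finset Λ} {x : A} (hx : x ∈ partialIdealSum F s) :
    -x ∈ partialIdealSum F s := by
  have := partialIdealSum_sub (partialIdealSum_zero_mem s) hx
  simpa using this

lemma partialIdealSum_single {l : Λ} {y : A} (hy : y ∈ F l) : y ∈ partialIdealSum F {l} :=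
  ⟨fun _ => y, fun m hm => by rwa [Finset.mem_singleton.mp hm], by simp⟩

lemma partialIdealSum_subset_ideal {s : Finset Λ} {K : ClosedIdeal A}
    (hK : ∀ l ∈ s, ∀ y ∈ F l, y ∈ K.carrier) : partialIdealSum F s ⊆ K.carrier := by
  rintro x ⟨f, hf, rfl⟩
  refine Finset.sum_induction f (· ∈ K.carrier) (fun a b ha hb => K.add_mem' ha hb)
    K.zero_mem' fun i hi => hK i hi _ (hf i hi)

lemma mem_idealFamilySum {s : Finset Λ} {x : A} (h : x ∈ partialIdealSum F s) :
    x ∈ idealFamilySum F := ⟨s, h⟩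

end AuxSum

section AuxSumClosure

variable {A : Type u} [NonUnitalCStarAlgebra A]
variable {Λ : Type u} {F : Λ → ClosedIdeal A}

lemma partialIdealSum_mul_left (a : A) {s : Finset Λ} {x : A}
    (hx : x ∈ partialIdealSum F s) : a * x ∈ partialIdealSum F s := by
  obtain ⟨f, hf, rfl⟩ := hx
  refine ⟨fun l => a * f l, fun l hl => (F l).mul_mem_left' a (hf l hl), ?_⟩
  show a * ∑ l ∈ s, f l = ∑ l ∈ s, a * f l
  rw [Finset.mul_sum]

lemma partialIdealSum_mul_right (a : A) {s : Finset Λ} {x : A}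
    (hx : x ∈ partialIdealSum F s) : x * a ∈ partialIdealSum F s := by
  obtain ⟨f, hf, rfl⟩ := hx
  refine ⟨fun l => f l * a, fun l hl => (F l).mul_mem_right' a (hf l hl), ?_⟩
  show (∑ l ∈ s, f l) * a = ∑ l ∈ s, f l * a
  rw [Finset.sum_mul]

/-- The closure of the algebraic sum of a family of ideals, as a closed ideal. -/
def famSumClosure (F : Λ → ClosedIdeal A) : ClosedIdeal A where
  carrier := closure (idealFamilySum F)
  zero_mem' := subset_closure (mem_idealFamilySum (partialIdealSum_zero_mem ∅))
  add_mem' := fun {x y} hx hy => by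
    classical
    exact map_mem_closure₂ continuous_add hx hy fun a ⟨s, ha⟩ b ⟨t, hb⟩ =>
      mem_idealFamilySum (partialIdealSum_add ha hb)
  neg_mem' := fun {x} hx =>
    map_mem_closure continuous_neg hx fun a ⟨s, ha⟩ =>
      mem_idealFamilySum (partialIdealSum_neg ha)
  mul_mem_left' := fun a {x} hx => by
    exact map_mem_closure (f := fun z => a * z) (continuous_mul_left a) hx fun b hb => by
      obtain ⟨s, hb⟩ := hb
      exact mem_idealFamilySum (partialIdealSum_mul_left a hb)
  mul_mem_right' := fun a {x} hx => by
    exact map_mem_closure (f := fun z => z * a) (continuous_mul_right a) hx fun b hb => by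
      obtain ⟨s, hb⟩ := hb
      exact mem_idealFamilySum (partialIdealSum_mul_right a hb)
  isClosed' := isClosed_closure

lemma closedIdealGen_subset_famSumClosure {S : Set A} {F : Λ → ClosedIdeal A}
    (h : S ⊆ closure (idealFamilySum F)) :
    (closedIdealGen S : Set A) ⊆ closure (idealFamilySum F) :=
  closedIdealGen_subset (I := famSumClosure F) h

end AuxSumClosure
section AuxClosedSum

set_option linter.unusedSectionVars false

variable {A : Type u} [NonUnitalCStarAlgebra A] [PartialOrder A] [StarOrderedRing A]
variable {Λ : Type u}

lemma norm_gbump_cfc_le_one {a : A} {δ : ℝ} (hδ : 0 < δ) : ‖cfcₙ (gbump δ) a‖ ≤ 1 :=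
  norm_cfcₙ_le' fun t _ => by
    rw [abs_of_nonneg (gbump_nonneg hδ t)]
    exact gbump_le_one δ t

/-- The sum of a closed ideal and a closed "ideal-like" set is closed. -/
lemma sum_set_closed (I : ClosedIdeal A) (T : Set A) (hTc : IsClosed T) (hT0 : (0:A) ∈ T)
    (hTsub : ∀ x y : A, x ∈ T → y ∈ T → x - y ∈ T)
    (hTmul : ∀ a x : A, x ∈ T → a * x ∈ T) :
    IsClosed {z : A | ∃ y ∈ I.carrier, ∃ t ∈ T, z = y + t} := by
  set S := {z : A | ∃ y ∈ I.carrier, ∃ t ∈ T, z = y + t} with hSdef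
  apply isClosed_of_closure_subset
  have hSsub : ∀ x y : A, x ∈ S → y ∈ S → x - y ∈ S := by
    rintro _ _ ⟨y1, hy1, t1, ht1, rfl⟩ ⟨y2, hy2, t2, ht2, rfl⟩
    exact ⟨y1 - y2, by rw [sub_eq_add_neg]; exact I.add_mem' hy1 (I.neg_mem' hy2),
      t1 - t2, hTsub _ _ ht1 ht2, by abel⟩
  have hKsub : ∀ x y : A, x ∈ closure S → y ∈ closure S → x - y ∈ closure S :=
    fun x y hx hy => map_mem_closure₂ continuous_sub hx hy fun a ha b hb => hSsub a b ha hb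
  have hS0 : (0:A) ∈ S := ⟨0, I.zero_mem', 0, hT0, by simp⟩
  have hTadd : ∀ x y : A, x ∈ T → y ∈ T → x + y ∈ T := by
    intro x y hx hy
    have := hTsub x (0 - y) hx (hTsub 0 y hT0 hy)
    simpa using this
  have step : ∀ x ∈ closure S, ∃ y t : A, y ∈ I.carrier ∧ t ∈ T ∧
      (x - y - t ∈ closure S) ∧ ‖x - y - t‖ ≤ ‖x‖/2 ∧ ‖y‖ ≤ ‖x‖ ∧ ‖t‖ ≤ 3*‖x‖ := by
    intro x hx
    rcases eq_or_ne x 0 with rfl | hx0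
    · exact ⟨0, 0, I.zero_mem', hT0, by simpa using hx, by simp, by simp, by simp⟩
    have hxn : 0 < ‖x‖ := norm_pos_iff.mpr hx0
    set η := ‖x‖/8 with hηdef
    have hηpos : 0 < η := by positivity
    obtain ⟨z, hzS, hdz⟩ := Metric.mem_closure_iff.mp hx η hηpos
    obtain ⟨y₀, hy₀, t₀, ht₀, rfl⟩ := hzS
    set δ := η^2/4 with hδdef
    have hδpos : 0 < δ := by positivity
    set e := cfcₙ (gbump δ) (y₀ * star y₀) with hedef
    have heI : e ∈ I.carrier := gbump_mem_of_mem (I.mul_mem_right' (star y₀) hy₀)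
      (.of_nonneg (mul_star_self_nonneg y₀)) hδpos
    have hey₀ : ‖y₀ - e * y₀‖ ≤ η :=
      (norm_sub_gbump_mul y₀ hδpos).trans (sqrt_est hηpos).le
    have hen : ‖e‖ ≤ 1 := norm_gbump_cfc_le_one hδpos
    have hwn : ‖x - y₀ - t₀‖ < η := by
      rw [sub_sub]
      rw [dist_eq_norm] at hdz
      exact hdz
    have hewn : ‖e * (x - y₀ - t₀)‖ ≤ ‖x - y₀ - t₀‖ := by
      calc ‖e * (x - y₀ - t₀)‖ ≤ ‖e‖ * ‖x - y₀ - t₀‖ := norm_mul_le _ _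
        _ ≤ 1 * ‖x - y₀ - t₀‖ := mul_le_mul_of_nonneg_right hen (norm_nonneg _)
        _ = ‖x - y₀ - t₀‖ := one_mul _
    have hid : x - e * x - (t₀ - e * t₀)
        = ((x - y₀ - t₀) - e * (x - y₀ - t₀)) + (y₀ - e * y₀) := by noncomm_ring
    have hrb : ‖x - e * x - (t₀ - e * t₀)‖ ≤ ‖x‖/2 := by
      rw [hid]
      calc ‖((x - y₀ - t₀) - e * (x - y₀ - t₀)) + (y₀ - e * y₀)‖
          ≤ ‖(x - y₀ - t₀) - e * (x - y₀ - t₀)‖ + ‖y₀ - e * y₀‖ := norm_add_le _ _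
        _ ≤ (‖x - y₀ - t₀‖ + ‖e * (x - y₀ - t₀)‖) + η := by
            have := norm_sub_le (x - y₀ - t₀) (e * (x - y₀ - t₀))
            linarith
        _ ≤ ‖x‖/2 := by
            rw [hηdef] at *
            linarith
    have hyb : ‖e * x‖ ≤ ‖x‖ := by
      calc ‖e * x‖ ≤ ‖e‖ * ‖x‖ := norm_mul_le _ _
        _ ≤ 1 * ‖x‖ := mul_le_mul_of_nonneg_right hen (norm_nonneg _)
        _ = ‖x‖ := one_mul _
    have htb : ‖t₀ - e * t₀‖ ≤ 3*‖x‖ := by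
      have hexp : t₀ - e * t₀ = (x - e * x) - (x - e * x - (t₀ - e * t₀)) := by abel
      rw [hexp]
      have h1 := norm_sub_le (x - e * x) (x - e * x - (t₀ - e * t₀))
      have h2 := norm_sub_le x (e * x)
      linarith
    refine ⟨e * x, t₀ - e * t₀, I.mul_mem_right' x heI,
      hTsub _ _ ht₀ (hTmul e _ ht₀), ?_, hrb, hyb, htb⟩
    · rw [sub_sub]
      exact hKsub x _ hx (subset_closure ⟨e * x, I.mul_mem_right' x heI, t₀ - e * t₀,
        hTsub _ _ ht₀ (hTmul e _ ht₀), rfl⟩)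
  choose! Y Z hY hZ hmem hhalf hYn hZn using step
  intro x hx
  let seq : ℕ → {z : A // z ∈ closure S} :=
    fun n => Nat.rec ⟨x, hx⟩ (fun _ p => ⟨p.1 - Y p.1 - Z p.1, hmem p.1 p.2⟩) n
  have hseq0 : (seq 0).1 = x := rfl
  have hseqS : ∀ n, (seq (n+1)).1 = (seq n).1 - Y (seq n).1 - Z (seq n).1 := fun n => rfl
  have hnorm : ∀ n, ‖(seq n).1‖ ≤ (1/2:ℝ)^n * ‖x‖ := by
    intro n
    induction n with
    | zero => simp [hseq0]
    | succ n ih =>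
      calc ‖(seq (n+1)).1‖ ≤ ‖(seq n).1‖/2 := by
            rw [hseqS]
            exact hhalf _ (seq n).2
        _ ≤ ((1/2:ℝ)^n * ‖x‖)/2 := by linarith
        _ = (1/2:ℝ)^(n+1) * ‖x‖ := by ring
  have hYb : ∀ n, ‖Y (seq n).1‖ ≤ (1/2:ℝ)^n * ‖x‖ :=
    fun n => (hYn _ (seq n).2).trans (hnorm n)
  have hZb : ∀ n, ‖Z (seq n).1‖ ≤ 3 * ((1/2:ℝ)^n * ‖x‖) :=
    fun n => (hZn _ (seq n).2).trans (by have := hnorm n; linarith)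
  have hgeom : Summable (fun n : ℕ => (1/2:ℝ)^n * ‖x‖) :=
    (summable_geometric_of_lt_one (by norm_num) (by norm_num)).mul_right _
  have hsy : Summable (fun n => Y (seq n).1) := Summable.of_norm_bounded hgeom hYb
  have hsz : Summable (fun n => Z (seq n).1) :=
    Summable.of_norm_bounded (hgeom.mul_left 3) hZb
  set ys := ∑' n, Y (seq n).1 with hysdef
  set zs := ∑' n, Z (seq n).1 with hzsdef
  have hysI : ys ∈ I.carrier := by
    refine I.isClosed'.mem_of_tendsto hsy.hasSum.tendsto_sum_nat
      (Filter.Eventually.of_forall fun n => ?_)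
    exact Finset.sum_induction _ (· ∈ I.carrier) (fun a b ha hb => I.add_mem' ha hb)
      I.zero_mem' fun i _ => hY _ (seq i).2
  have hzsT : zs ∈ T := by
    refine hTc.mem_of_tendsto hsz.hasSum.tendsto_sum_nat
      (Filter.Eventually.of_forall fun n => ?_)
    exact Finset.sum_induction _ (· ∈ T) (fun a b ha hb => hTadd a b ha hb)
      hT0 fun i _ => hZ _ (seq i).2
  have htel : ∀ n, x - ∑ i ∈ Finset.range n, (Y (seq i).1 + Z (seq i).1) = (seq n).1 := by
    intro n
    induction n with
    | zero => simp [hseq0]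
    | succ n ih =>
      rw [Finset.sum_range_succ, hseqS, ← ih]
      abel
  have hlim0 : Filter.Tendsto (fun n => (seq n).1) Filter.atTop (nhds 0) := by
    refine squeeze_zero_norm hnorm ?_
    have h1 : Filter.Tendsto (fun n : ℕ => (1/2:ℝ)^n) Filter.atTop (nhds 0) :=
      tendsto_pow_atTop_nhds_zero_of_lt_one (by norm_num) (by norm_num)
    simpa using h1.mul_const ‖x‖
  have hlim : Filter.Tendsto (fun n => (seq n).1) Filter.atTop (nhds (x - (ys + zs))) := by
    have h2 := (hsy.hasSum.add hsz.hasSum).tendsto_sum_nat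
    have h3 := Filter.Tendsto.sub (tendsto_const_nhds (x := x)) h2
    simpa only [htel] using h3
  have hzero : x - (ys + zs) = 0 := tendsto_nhds_unique hlim hlim0
  exact ⟨ys, hysI, zs, hzsT, sub_eq_zero.mp hzero⟩

end AuxClosedSum
section AuxPS2

set_option linter.unusedSectionVars false

variable {A : Type u} [NonUnitalCStarAlgebra A] [PartialOrder A] [StarOrderedRing A]
variable {Λ : Type u} {F : Λ → ClosedIdeal A}

lemma partialIdealSum_add_same {s : Finset Λ} {x y : A} (hx : x ∈ partialIdealSum F s)
    (hy : y ∈ partialIdealSum F s) : x + y ∈ partialIdealSum F s := by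
  have := partialIdealSum_sub hx (partialIdealSum_sub (partialIdealSum_zero_mem s) hy)
  simpa using this

lemma partialIdealSum_star {s : Finset Λ} {x : A}
    (hx : x ∈ partialIdealSum F s) : star x ∈ partialIdealSum F s := by
  obtain ⟨f, hf, rfl⟩ := hx
  refine ⟨fun l => star (f l), fun l hl => star_mem_closedIdeal (hf l hl), ?_⟩
  show star (∑ l ∈ s, f l) = ∑ l ∈ s, star (f l)
  rw [star_sum]

lemma partialIdealSum_smul (r : ℝ) {s : Finset Λ} {x : A}
    (hx : x ∈ partialIdealSum F s) : r • x ∈ partialIdealSum F s := by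
  obtain ⟨f, hf, rfl⟩ := hx
  refine ⟨fun l => r • f l, fun l hl => smul_mem_closedIdeal r (hf l hl), ?_⟩
  show r • ∑ l ∈ s, f l = ∑ l ∈ s, r • f l
  rw [Finset.smul_sum]

lemma partialIdealSum_isClosed (F : Λ → ClosedIdeal A) (s : Finset Λ) :
    IsClosed (partialIdealSum F s) := by
  classical
  induction s using Finset.induction_on with
  | empty =>
    have he : partialIdealSum F ∅ = {(0:A)} := by
      ext x
      constructor
      · rintro ⟨f, -, rfl⟩
        simp
      · intro hx
        rw [Set.mem_singleton_iff] at hx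
        rw [hx]
        exact partialIdealSum_zero_mem ∅
    rw [he]
    exact isClosed_singleton
  | @insert l s hl ih =>
    have heq : partialIdealSum F (insert l s)
        = {z : A | ∃ y ∈ (F l).carrier, ∃ t ∈ partialIdealSum F s, z = y + t} := by
      ext x
      constructor
      · rintro ⟨f, hf, rfl⟩
        refine ⟨f l, hf l (Finset.mem_insert_self l s), ∑ i ∈ s, f i,
          ⟨f, fun i hi => hf i (Finset.mem_insert_of_mem hi), rfl⟩, ?_⟩
        rw [Finset.sum_insert hl]
      · rintro ⟨y, hy, t, ⟨g, hg, rfl⟩, rfl⟩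
        refine ⟨fun i => if i = l then y else g i, fun i hi => ?_, ?_⟩
        · rcases Finset.mem_insert.mp hi with rfl | hi
          · dsimp only; rw [if_pos rfl]; exact hy
          · have hne : i ≠ l := fun h => hl (h ▸ hi)
            simpa [hne] using hg i hi
        · rw [Finset.sum_insert hl, if_pos rfl]
          congr 1
          refine Finset.sum_congr rfl fun i hi => ?_
          have hne : i ≠ l := fun h => hl (h ▸ hi)
          simp [hne]
    rw [heq]
    exact sum_set_closed (F l) _ ih (partialIdealSum_zero_mem s)
      (fun x y hx hy => partialIdealSum_sub hx hy)
      (fun a x hx => partialIdealSum_mul_left a hx)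

/-- The zero ideal `{0}` as a closed ideal. -/
def zeroIdeal' : ClosedIdeal A where
  carrier := {0}
  zero_mem' := rfl
  add_mem' := fun hx hy => by
    rw [Set.mem_singleton_iff] at *
    rw [hx, hy, add_zero]
  neg_mem' := fun hx => by
    rw [Set.mem_singleton_iff] at *
    rw [hx, neg_zero]
  mul_mem_left' := fun a {x} hx => by
    rw [Set.mem_singleton_iff] at *
    rw [hx, mul_zero]
  mul_mem_right' := fun a {x} hx => by
    rw [Set.mem_singleton_iff] at *
    rw [hx, zero_mul]
  isClosed' := isClosed_singleton

lemma zeroIdeal_subset : ((zeroIdeal : ClosedIdeal A) : Set A) ⊆ {0} :=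
  closedIdealGen_subset (I := zeroIdeal') (Set.empty_subset _)

lemma real_smul_nonneg {r : ℝ} (hr : 0 ≤ r) {x : A} (hx : 0 ≤ x) : 0 ≤ r • x := by
  have h1 : r • x = star (Real.sqrt r • cfcₙ Real.sqrt x) * (Real.sqrt r • cfcₙ Real.sqrt x) := by
    rw [star_smul, star_trivial, (cfcₙ_predicate Real.sqrt x : IsSelfAdjoint _).star_eq,
      smul_mul_smul_comm, Real.mul_self_sqrt hr, sqrt_mul_self_eq hx]
  rw [h1]
  exact star_mul_self_nonneg _

end AuxPS2
section AuxCore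

set_option linter.unusedSectionVars false

variable {A : Type u} [NonUnitalCStarAlgebra A] [PartialOrder A] [StarOrderedRing A]

/-- **Core lemma**: if `a ≥ 0` lies in the closure of the algebraic sum of a family of
closed ideals, then for every `ε > 0` the closed ideal generated by `(a - ε)₊` is contained
in a finite partial sum of the family. -/
lemma core_lemma {Λ : Type u} (F : Λ → ClosedIdeal A) {a : A} (ha : 0 ≤ a)
    (hmem : a ∈ closure (idealFamilySum F)) {ε : ℝ} (hε : 0 < ε) :
    ∃ s : Finset Λ, (closedIdealGen {cfcₙ (fcut ε) a} : Set A) ⊆ partialIdealSum F s := by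
  have hsa : IsSelfAdjoint a := .of_nonneg ha
  set δ := ε/8 with hδdef
  have hδ : 0 < δ := by positivity
  obtain ⟨z, hz, hdz⟩ := Metric.mem_closure_iff.mp hmem δ hδ
  obtain ⟨s, hzs⟩ := hz
  refine ⟨s, ?_⟩
  -- the selfadjoint approximant inside the partial sum
  set b := (1/2 : ℝ) • (z + star z) with hbdef
  have hbT : b ∈ partialIdealSum F s :=
    partialIdealSum_smul _ (partialIdealSum_add_same hzs (partialIdealSum_star hzs))
  have hbsa : IsSelfAdjoint b := IsSelfAdjoint.smul (star_trivial _) (IsSelfAdjoint.add_star_self z)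
  have hab : a - b = (1/2 : ℝ) • ((a - z) + star (a - z)) := by
    rw [star_sub, hsa.star_eq, hbdef]
    module
  have habn : ‖a - b‖ ≤ δ := by
    rw [hab]
    have h1 : ‖a - z‖ < δ := by rwa [dist_eq_norm] at hdz
    calc ‖(1/2 : ℝ) • ((a - z) + star (a - z))‖
        = (1/2 : ℝ) * ‖(a - z) + star (a - z)‖ := by
          rw [norm_smul, Real.norm_eq_abs, abs_of_nonneg (by norm_num : (0:ℝ) ≤ 1/2)]
      _ ≤ (1/2 : ℝ) * (‖a - z‖ + ‖star (a - z)‖) := by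
          have := norm_add_le (a - z) (star (a - z))
          nlinarith [norm_nonneg ((a-z) + star (a-z))]
      _ ≤ δ := by
          rw [norm_star]
          linarith
  -- the bump localizing above ε
  set θ : ℝ → ℝ := fun t => min (fcut (3*ε/4) t * (4/ε)) 1 with hθdef
  have hθc : Continuous θ := ((continuous_fcut _).mul continuous_const).min continuous_const
  have hθ0 : θ 0 = 0 := by
    show min (fcut (3*ε/4) 0 * (4/ε)) 1 = 0
    rw [fcut_zero (by linarith), zero_mul]
    exact min_eq_left zero_le_one
  have hθnonneg : ∀ t, 0 ≤ θ t := fun t =>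
    le_min (mul_nonneg (fcut_nonneg _ _) (by positivity)) zero_le_one
  have hθle1 : ∀ t, θ t ≤ 1 := fun t => min_le_right _ _
  have hθzero : ∀ t, t ≤ 3*ε/4 → θ t = 0 := by
    intro t ht
    show min (fcut (3*ε/4) t * (4/ε)) 1 = 0
    rw [fcut_eq_zero ht, zero_mul]
    exact min_eq_left zero_le_one
  have hθone : ∀ t, ε ≤ t → θ t = 1 := by
    intro t ht
    show min (fcut (3*ε/4) t * (4/ε)) 1 = 1
    refine min_eq_right ?_
    have h1 : fcut (3*ε/4) t = t - 3*ε/4 := max_eq_left (by linarith)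
    rw [h1]
    rw [← sub_nonneg]
    have : (t - 3*ε/4) * (4/ε) - 1 = (4*t - 3*ε - ε)/ε := by field_simp
    rw [this]
    exact div_nonneg (by linarith) hε.le
  set m := cfcₙ θ a with hmdef
  have hmsa : IsSelfAdjoint m := cfcₙ_predicate _ a
  set φ : ℝ → ℝ := fun t => θ t^2 * (t - δ) with hφdef
  have hφc : Continuous φ := (hθc.pow 2).mul (continuous_id.sub continuous_const)
  have hφ0 : φ 0 = 0 := by
    show θ 0 ^2 * (0 - δ) = 0
    rw [hθ0]
    ring
  have hφnonneg : ∀ t, 0 ≤ φ t := by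
    intro t
    rcases le_or_gt t (3*ε/4) with h | h
    · show 0 ≤ θ t ^2 * (t - δ)
      rw [hθzero t h]
      simp
    · have h1 : 0 ≤ t - δ := by
        rw [hδdef]; linarith
      exact mul_nonneg (sq_nonneg _) h1
  -- the conjugation inequality
  have key : m * (a - b) * m ≤ δ • (m * m) := by
    have h1 : m * (a - b) * m ≤ ‖a - b‖ • (m * m) := by
      have := CStarAlgebra.star_right_conjugate_le_norm_smul (a := m) (b := a - b)
        (hsa.sub hbsa)
      rwa [hmsa.star_eq] at this
    refine h1.trans ?_
    rw [← sub_nonneg, ← sub_smul]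
    refine real_smul_nonneg (by linarith) ?_
    have hmm := star_mul_self_nonneg m
    rwa [hmsa.star_eq] at hmm
  have key2 : m * a * m - δ • (m * m) ≤ m * b * m := by
    have hexp : m * (a - b) * m = m * a * m - m * b * m := by noncomm_ring
    rw [hexp] at key
    have := sub_le_iff_le_add.mp key
    rw [sub_le_iff_le_add]
    rwa [add_comm] at this
  -- p = cfcₙ φ a
  have e0 : cfcₙ (fun t : ℝ => θ t * t) a = m * a := by
    rw [cfcₙ_mul' a hθc hθ0 continuous_id' rfl, cfcₙ_id' ℝ a hsa]
  have e1 : cfcₙ (fun t : ℝ => θ t * t * θ t) a = m * a * m := by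
    rw [cfcₙ_mul' (f := fun t => θ t * t) (g := θ) a ((hθc.mul continuous_id')) (by simpa using hθ0) hθc hθ0, e0]
  have e2 : cfcₙ (fun t : ℝ => δ * (θ t * θ t)) a = δ • (m * m) := by
    rw [cfcₙ_const_mul δ (fun t => θ t * θ t) a ((hθc.mul hθc).continuousOn)
      (show θ (0:ℝ) * θ 0 = 0 by rw [hθ0]; ring),
      cfcₙ_mul' a hθc hθ0 hθc hθ0]
  have hp : cfcₙ φ a = m * a * m - δ • (m * m) := by
    have hsplit : cfcₙ (fun t : ℝ => θ t * t * θ t - δ * (θ t * θ t)) a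
        = cfcₙ (fun t : ℝ => θ t * t * θ t) a - cfcₙ (fun t : ℝ => δ * (θ t * θ t)) a :=
      cfcₙ_sub' a ((hθc.mul continuous_id').mul hθc) (by simpa using hθ0)
        (continuous_const.mul (hθc.mul hθc)) (show δ * (θ (0:ℝ) * θ 0) = 0 by rw [hθ0]; ring)
    calc cfcₙ φ a = cfcₙ (fun t : ℝ => θ t * t * θ t - δ * (θ t * θ t)) a :=
          cfcₙ_congr fun t _ => by show φ t = _; rw [hφdef]; ring
      _ = m * a * m - δ • (m * m) := by rw [hsplit, e1, e2]
  have hp0 : 0 ≤ cfcₙ φ a := cfcₙ_nonneg fun t _ => hφnonneg t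
  -- q = m * b * m lies in the partial sum
  have hq : m * b * m ∈ partialIdealSum F s :=
    partialIdealSum_mul_right m (partialIdealSum_mul_left m hbT)
  -- the partial sum as a closed ideal
  set T : ClosedIdeal A :=
    { carrier := partialIdealSum F s
      zero_mem' := partialIdealSum_zero_mem s
      add_mem' := fun hx hy => partialIdealSum_add_same hx hy
      neg_mem' := fun hx => partialIdealSum_neg hx
      mul_mem_left' := fun c {x} hx => partialIdealSum_mul_left c hx
      mul_mem_right' := fun c {x} hx => partialIdealSum_mul_right c hx
      isClosed' := partialIdealSum_isClosed F s } with hTdef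
  have hpT : cfcₙ φ a ∈ T.carrier :=
    mem_of_nonneg_of_le_of_mem (a := m * b * m) hq hp0 (hp ▸ key2)
  -- conclude : the generator (a - ε)₊ factors through φ
  have hgen : cfcₙ (fcut ε) a ∈ T.carrier := by
    refine cfc_factor_mem (g := fun t => fcut ε t / max (φ t) (3*ε/8)) (h := φ)
      (fun t => ?_)
      ((continuous_fcut ε).div (hφc.max continuous_const)
        fun t => (lt_max_of_lt_right (by positivity)).ne')
      (show fcut ε 0 / max (φ 0) (3*ε/8) = 0 by rw [fcut_zero hε.le, zero_div])
      hφc hφ0 hpT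
    show fcut ε t = fcut ε t / max (φ t) (3*ε/8) * φ t
    rcases le_or_gt t ε with h | h
    · rw [fcut_eq_zero h, zero_div, zero_mul]
    · have hθt : θ t = 1 := hθone t h.le
      have hφt : φ t = t - δ := by
        show θ t ^2 * (t - δ) = t - δ
        rw [hθt]
        ring
      have hφbig : 3*ε/8 ≤ φ t := by
        rw [hφt, hδdef]
        linarith
      rw [max_eq_left hφbig, div_mul_cancel₀]
      rw [hφt, hδdef]
      intro hcontra
      have : t = ε/8 := by linarith
      rw [this] at h
      linarith
  exact closedIdealGen_subset (I := T) (Set.singleton_subset_iff.mpr hgen)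

end AuxCore
section AuxFam

set_option linter.unusedSectionVars false

variable {A : Type u} [NonUnitalCStarAlgebra A] [PartialOrder A] [StarOrderedRing A]

/-- The family of cut-down ideals of a fixed positive element. -/
noncomputable def cutFam (a : A) : ULift.{u} ℝ → ClosedIdeal A := fun d =>
  closedIdealGen (⋃ (_ : 0 < d.down), {cfcₙ (fcut d.down) a})

lemma cutFam_pos {a : A} {d : ULift.{u} ℝ} (h : 0 < d.down) :
    cutFam a d = closedIdealGen {cfcₙ (fcut d.down) a} := by
  unfold cutFam
  congr 1
  ext y
  simp [h]

lemma cutFam_neg {a : A} {d : ULift.{u} ℝ} (h : ¬ 0 < d.down) :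
    cutFam a d = zeroIdeal := by
  unfold cutFam zeroIdeal
  congr 1
  ext y
  simp [h]

/-- The family of all cut-downs of positive elements of an ideal `J`. -/
noncomputable def pairFam (J : ClosedIdeal A) : A × ULift.{u} ℝ → ClosedIdeal A := fun p =>
  closedIdealGen (⋃ (_ : 0 < p.2.down ∧ p.1 ∈ J.carrier ∧ 0 ≤ p.1),
    {cfcₙ (fcut p.2.down) p.1})

lemma pairFam_pos {J : ClosedIdeal A} {p : A × ULift.{u} ℝ}
    (h : 0 < p.2.down ∧ p.1 ∈ J.carrier ∧ 0 ≤ p.1) :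
    pairFam J p = closedIdealGen {cfcₙ (fcut p.2.down) p.1} := by
  unfold pairFam
  congr 1
  ext y
  simp [h]

lemma pairFam_neg {J : ClosedIdeal A} {p : A × ULift.{u} ℝ}
    (h : ¬ (0 < p.2.down ∧ p.1 ∈ J.carrier ∧ 0 ≤ p.1)) :
    pairFam J p = zeroIdeal := by
  unfold pairFam zeroIdeal
  congr 1
  ext y
  simp [h]

/-- A positive element is in the closure of the sum of its own cut-down family. -/
lemma pos_mem_closure_cutFam {a : A} (ha : 0 ≤ a) :
    a ∈ closure (idealFamilySum (cutFam a)) := by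
  rw [Metric.mem_closure_iff]
  intro η hη
  refine ⟨cfcₙ (fcut (η/2)) a, ?_, ?_⟩
  · refine mem_idealFamilySum (s := {ULift.up (η/2)}) (partialIdealSum_single ?_)
    show cfcₙ (fcut (η/2)) a ∈ (cutFam a (ULift.up (η/2))).carrier
    rw [cutFam_pos (by simpa using half_pos hη)]
    exact mem_closedIdealGen_self
  · rw [dist_eq_norm]
    have := norm_sub_fcut_le ha (half_pos hη)
    linarith

/-- Every element of a closed ideal `J` is in the closure of the sum of the family of
cut-downs of positive elements of `J`. -/
lemma mem_closure_pairFam (J : ClosedIdeal A) {x : A} (hx : x ∈ J.carrier) :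
    x ∈ closure (idealFamilySum (pairFam J)) := by
  rw [Metric.mem_closure_iff]
  intro η hη
  set δ := η^2/4 with hδdef
  have hδ : 0 < δ := by positivity
  set a := x * star x with hadef
  have haJ : a ∈ J.carrier := J.mul_mem_right' (star x) hx
  have ha0 : 0 ≤ a := mul_star_self_nonneg x
  set u := cfcₙ (gbump δ) a with hudef
  have humem : u ∈ (closedIdealGen {cfcₙ (fcut (δ/2)) a}).carrier := gbump_mem_gen a hδ
  have huxmem : u * x ∈ (closedIdealGen {cfcₙ (fcut (δ/2)) a}).carrier :=
    (closedIdealGen _).mul_mem_right' x humem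
  refine ⟨u * x, ?_, ?_⟩
  · refine mem_idealFamilySum (s := {(a, ULift.up (δ/2))}) (partialIdealSum_single ?_)
    show u * x ∈ (pairFam J (a, ULift.up (δ/2))).carrier
    rw [pairFam_pos (by exact ⟨by simpa using half_pos hδ, haJ, ha0⟩)]
    exact huxmem
  · rw [dist_eq_norm]
    exact lt_of_le_of_lt (norm_sub_gbump_mul x hδ) (sqrt_est hη)

end AuxFam
section AuxCollapse

set_option linter.unusedSectionVars false

variable {A : Type u} [NonUnitalCStarAlgebra A] [PartialOrder A] [StarOrderedRing A]

lemma subset_gen_cut_of_mem_gen (a : A) (ha : 0 ≤ a) {c : A} (hc0 : 0 ≤ c)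
    (hc : c ∈ (closedIdealGen {a}).carrier) {r : ℝ} (hr : 0 < r) :
    ∃ ε' : ℝ, 0 < ε' ∧
      ((closedIdealGen {cfcₙ (fcut r) c} : Set A) ⊆
        (closedIdealGen {cfcₙ (fcut ε') a} : Set A)) := by
  classical
  have hclos : c ∈ closure (idealFamilySum (cutFam a)) :=
    closedIdealGen_subset_famSumClosure
      (Set.singleton_subset_iff.mpr (pos_mem_closure_cutFam ha)) hc
  obtain ⟨s2, hs2⟩ := core_lemma (cutFam a) hc0 hclos hr
  set s2' := s2.filter (fun d => 0 < d.down) with hs2'def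
  rcases s2'.eq_empty_or_nonempty with he | hne
  · refine ⟨1, one_pos, ?_⟩
    intro y hy
    have h0 : y = 0 := by
      obtain ⟨f, hf, rfl⟩ := hs2 hy
      refine Finset.sum_eq_zero fun d hd => ?_
      have hbad : ¬ 0 < d.down := by
        intro hgood
        have hmem : d ∈ s2' := Finset.mem_filter.mpr ⟨hd, hgood⟩
        rw [he] at hmem
        exact absurd hmem (Finset.notMem_empty d)
      have hfd := hf d hd
      rw [cutFam_neg hbad] at hfd
      have h2 := zeroIdeal_subset hfd
      rwa [Set.mem_singleton_iff] at h2
    rw [h0]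
    exact (closedIdealGen _).zero_mem'
  · set ε' := s2'.inf' hne (fun d => d.down) with hε'def
    have hε'pos : 0 < ε' := by
      rw [hε'def, Finset.lt_inf'_iff]
      exact fun d hd => (Finset.mem_filter.mp hd).2
    refine ⟨ε', hε'pos, ?_⟩
    intro y hy
    refine partialIdealSum_subset_ideal (K := closedIdealGen {cfcₙ (fcut ε') a}) ?_ (hs2 hy)
    intro d hd w hw
    by_cases hgood : 0 < d.down
    · rw [cutFam_pos hgood] at hw
      have hd' : d ∈ s2' := Finset.mem_filter.mpr ⟨hd, hgood⟩
      exact closedIdealGen_subset (Set.singleton_subset_iff.mpr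
        (fcut_mem_gen_of_le hε'pos (Finset.inf'_le _ hd'))) hw
    · rw [cutFam_neg hgood] at hw
      have h2 := zeroIdeal_subset hw
      rw [Set.mem_singleton_iff] at h2
      rw [h2]
      exact (closedIdealGen _).zero_mem'

end AuxCollapse
/-- Let `A` be a C*-algebra and `I, J` closed two-sided ideals of `A`. Then
`I ⋐ J` iff there exist a positive `a ∈ J` and `ε > 0` with `I ⊆ closure (A (a-ε)₊ A)`.
In particular, `closure (A (a-ε)₊ A) ⋐ closure (A a A)` for every positive `a ∈ A`, `ε > 0`. -/
theorem compactlyContained_iff_exists_cutdown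
    {A : Type u} [NonUnitalCStarAlgebra A] (I J : ClosedIdeal A) :
    (CompactlyContained I J ↔
      ∃ a ∈ J, IsPositiveElem a ∧ ∃ ε : ℝ, 0 < ε ∧
        (I : Set A) ⊆ (closedIdealGen {cfcₙ (fun t : ℝ => max (t - ε) 0) a} : Set A)) ∧
    (∀ a : A, IsPositiveElem a → ∀ ε : ℝ, 0 < ε →
      CompactlyContained
        (closedIdealGen {cfcₙ (fun t : ℝ => max (t - ε) 0) a})
        (closedIdealGen {a})) := by
  letI : PartialOrder A := cstarPO A
  haveI : StarOrderedRing A := cstarSOR A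
  constructor
  · constructor
    · -- forward direction
      intro hIJ
      classical
      have hJsub : (J : Set A) ⊆ closure (idealFamilySum (pairFam J)) :=
        fun x hx => mem_closure_pairFam J hx
      obtain ⟨s, hs⟩ := hIJ (pairFam J) hJsub
      set cond : A × ULift.{u} ℝ → Prop :=
        fun p => 0 < p.2.down ∧ p.1 ∈ J.carrier ∧ 0 ≤ p.1 with hconddef
      set G := s.filter cond with hGdef
      rcases G.eq_empty_or_nonempty with hGe | hGne
      · refine ⟨0, J.zero_mem', ⟨0, by simp⟩, 1, one_pos, ?_⟩
        intro x hxI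
        have h0 : x = 0 := by
          obtain ⟨f, hf, rfl⟩ := hs hxI
          refine Finset.sum_eq_zero fun p hp => ?_
          have hbad : ¬ cond p := by
            intro hgood
            have hmem : p ∈ G := Finset.mem_filter.mpr ⟨hp, hgood⟩
            rw [hGe] at hmem
            exact absurd hmem (Finset.notMem_empty p)
          have hfp := hf p hp
          rw [pairFam_neg hbad] at hfp
          have h2 := zeroIdeal_subset hfp
          rwa [Set.mem_singleton_iff] at h2
        rw [h0]
        exact (closedIdealGen _).zero_mem'
      · set aS := ∑ p ∈ G, p.1 with haSdef
        have haSJ : aS ∈ J.carrier :=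
          Finset.sum_induction _ (· ∈ J.carrier) (fun a b ha hb => J.add_mem' ha hb)
            J.zero_mem' (fun p hp => (Finset.mem_filter.mp hp).2.2.1)
        have haS0 : 0 ≤ aS := Finset.sum_nonneg fun p hp => (Finset.mem_filter.mp hp).2.2.2
        have claim : ∀ p ∈ G, ∃ ε' : ℝ, 0 < ε' ∧
            ((pairFam J p : Set A) ⊆ (closedIdealGen {cfcₙ (fcut ε') aS} : Set A)) := by
          intro p hp
          have hcond : cond p := (Finset.mem_filter.mp hp).2
          have hple : p.1 ≤ aS := by
            rw [← sub_nonneg]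
            have hsum : aS - p.1 = ∑ q ∈ G.erase p, q.1 := by
              rw [haSdef, ← Finset.add_sum_erase G _ hp]
              abel
            rw [hsum]
            exact Finset.sum_nonneg fun q hq =>
              (Finset.mem_filter.mp (Finset.mem_of_mem_erase hq)).2.2.2
          have hpgen : p.1 ∈ (closedIdealGen {aS}).carrier :=
            mem_of_nonneg_of_le_of_mem mem_closedIdealGen_self hcond.2.2 hple
          obtain ⟨ε', hε'pos, hsub⟩ :=
            subset_gen_cut_of_mem_gen aS haS0 hcond.2.2 hpgen hcond.1
          refine ⟨ε', hε'pos, ?_⟩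
          rw [pairFam_pos hcond]
          exact hsub
        choose! ep hep1 hep2 using claim
        set ε := G.inf' hGne ep with hεdef
        have hεpos : 0 < ε := by
          rw [hεdef, Finset.lt_inf'_iff]
          exact fun p hp => hep1 p hp
        refine ⟨aS, haSJ, isPositiveElem_iff_nonneg.mpr haS0, ε, hεpos, ?_⟩
        intro x hxI
        refine partialIdealSum_subset_ideal
          (K := closedIdealGen {cfcₙ (fcut ε) aS}) ?_ (hs hxI)
        intro p hp w hw
        by_cases hgood : cond p
        · have hpG : p ∈ G := Finset.mem_filter.mpr ⟨hp, hgood⟩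
          have h2 := hep2 p hpG hw
          exact closedIdealGen_subset (Set.singleton_subset_iff.mpr
            (fcut_mem_gen_of_le hεpos (Finset.inf'_le _ hpG))) h2
        · rw [pairFam_neg hgood] at hw
          have h2 := zeroIdeal_subset hw
          rw [Set.mem_singleton_iff] at h2
          rw [h2]
          exact (closedIdealGen _).zero_mem'
    · -- backward direction
      rintro ⟨a, haJ, hapos, ε, hεpos, hIsub⟩
      intro Λ F hJF
      have ha0 : 0 ≤ a := isPositiveElem_iff_nonneg.mp hapos
      have haclos : a ∈ closure (idealFamilySum F) := hJF haJ
      obtain ⟨s, hsub⟩ := core_lemma F ha0 haclos hεpos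
      exact ⟨s, fun x hx => hsub (hIsub hx)⟩
  · -- second statement
    intro a hapos ε hεpos
    intro Λ F hJF
    have ha0 : 0 ≤ a := isPositiveElem_iff_nonneg.mp hapos
    have haclos : a ∈ closure (idealFamilySum F) := hJF mem_closedIdealGen_self
    obtain ⟨s, hsub⟩ := core_lemma F ha0 haclos hεpos
    exact ⟨s, hsub⟩
end

section
/- Let φ, ψ: A → B be *-homomorphisms between C*-algebras which are approximately Murray–von Neumann equivalent. Then for every finite subset F ⊂ A and every ε > 0 there exists a contraction u ∈ B (i.e. ‖u‖ ≤ 1) such that ‖u*φ(a)u − ψ(a)‖ < ε and ‖uψ(a)u* − φ(a)‖ < ε for all a ∈ F. -/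
open Filter Topology Set

universe u v


open Unitization in
lemma exists_sa_contraction_approx_unit
    {A : Type u} [NonUnitalCStarAlgebra A] (F : Finset A) {η : ℝ} (hη : 0 < η) :
    ∃ e : A, star e = e ∧ ‖e‖ ≤ 1 ∧ ∀ a ∈ F, ‖e * a * e - a‖ < η := by
  classical
  letI : PartialOrder (Unitization ℂ A) := CStarAlgebra.spectralOrder _
  haveI : StarOrderedRing (Unitization ℂ A) := CStarAlgebra.spectralOrderedRing _
  set δ : ℝ := (η / 3) ^ 2 with hδdef
  have hδ : 0 < δ := by positivity
  set b : A := ∑ x ∈ F, (star x * x + x * star x) with hbdef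
  have hb : IsSelfAdjoint b := by
    simp [hbdef, IsSelfAdjoint, star_sum, star_add, star_mul, star_star, add_comm]
  set f : ℝ → ℝ := fun t => max 0 (min 1 (t / δ)) with hfdef
  have cf : Continuous f := continuous_const.max (continuous_const.min (continuous_id.div_const δ))
  have hf0 : f 0 = 0 := by simp [hfdef]
  have hf01 : ∀ t, 0 ≤ f t ∧ f t ≤ 1 := fun t =>
    ⟨le_max_left _ _, max_le zero_le_one (min_le_left _ _)⟩
  set e : A := cfcₙ f b with hedef
  have he_sa : IsSelfAdjoint e := cfcₙ_predicate f b
  have he_norm : ‖e‖ ≤ 1 := norm_cfcₙ_le fun t _ => by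
    rw [Real.norm_eq_abs, abs_of_nonneg (hf01 t).1]; exact (hf01 t).2
  -- b is nonneg in the unitization
  have hpush : ∀ x : A, ((star x * x + x * star x : A) : Unitization ℂ A)
      = star (x : Unitization ℂ A) * x + (x : Unitization ℂ A) * star (x : Unitization ℂ A) := fun x => by
    simp [Unitization.inr_add, Unitization.inr_mul, Unitization.inr_star]
  have hb₁sum : ((b : A) : Unitization ℂ A)
      = ∑ x ∈ F, (star (x : Unitization ℂ A) * x + (x : Unitization ℂ A) * star (x : Unitization ℂ A)) := by
    rw [hbdef]
    rw [show ((∑ x ∈ F, (star x * x + x * star x) : A) : Unitization ℂ A)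
        = ∑ x ∈ F, ((star x * x + x * star x : A) : Unitization ℂ A) from
      map_sum (Unitization.inrNonUnitalStarAlgHom ℂ A) _ F]
    exact Finset.sum_congr rfl fun x _ => hpush x
  have hb1 : (0 : Unitization ℂ A) ≤ (b : Unitization ℂ A) := hb₁sum ▸
    Finset.sum_nonneg fun x _ => add_nonneg (star_mul_self_nonneg _) (mul_star_self_nonneg _)
  have hq : ∀ t ∈ quasispectrum ℝ b, 0 ≤ t := by
    intro t ht
    rw [Unitization.quasispectrum_eq_spectrum_inr' ℝ ℂ b] at ht
    exact spectrum_nonneg_of_nonneg hb1 ht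
  -- the function g and its norm bound
  set g : ℝ → ℝ := fun t => (1 - f t) ^ 2 * t with hgdef
  have hgnorm : ‖cfcₙ g b‖ ≤ δ := norm_cfcₙ_le fun t ht => by
    obtain ⟨h1, h2⟩ := hf01 t
    have h0 : 0 ≤ t := hq t ht
    rw [Real.norm_eq_abs, abs_of_nonneg (by positivity)]
    simp only [hgdef]
    rcases le_or_gt t δ with hle | hlt
    · have hsq : (1 - f t) ^ 2 ≤ 1 := by nlinarith
      calc (1 - f t) ^ 2 * t ≤ 1 * t := mul_le_mul_of_nonneg_right hsq h0
        _ ≤ δ := by linarith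
    · have hft : f t = 1 := by
        have h1' : (1 : ℝ) ≤ t / δ := (one_le_div hδ).mpr hlt.le
        simp [hfdef, min_eq_left h1', max_eq_right zero_le_one]
      simp only [hgdef, hft]
      norm_num [hδ.le]
  -- continuity facts
  have cft : Continuous (fun t : ℝ => f t * t) := cf.mul continuous_id
  have ctf : Continuous (fun t : ℝ => t * f t) := continuous_id.mul cf
  have cftf : Continuous (fun t : ℝ => f t * t * f t) := cft.mul cf
  -- identify cfcₙ g b with a polynomial expression in e and b
  have h1 : cfcₙ (fun t : ℝ => f t * t) b = e * b := by
    have := cfcₙ_mul f (fun t : ℝ => t) b cf.continuousOn hf0 continuous_id.continuousOn rfl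
    rw [this, cfcₙ_id' ℝ b]
  have h2 : cfcₙ (fun t : ℝ => t * f t) b = b * e := by
    have := cfcₙ_mul (fun t : ℝ => t) f b continuous_id.continuousOn rfl cf.continuousOn hf0
    rw [this, cfcₙ_id' ℝ b]
  have h3 : cfcₙ (fun t : ℝ => f t * t * f t) b = e * b * e := by
    have := cfcₙ_mul (fun t : ℝ => f t * t) f b cft.continuousOn (by simp [hf0]) cf.continuousOn hf0
    rw [this, h1]
  have hkey : cfcₙ g b = b - e * b - b * e + e * b * e := by
    have e1 : cfcₙ g b = cfcₙ (fun t : ℝ => (t - f t * t - t * f t) + f t * t * f t) b :=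
      cfcₙ_congr fun t _ => by simp only [hgdef]; ring
    have e2 : cfcₙ (fun t : ℝ => (t - f t * t - t * f t) + f t * t * f t) b
        = cfcₙ (fun t : ℝ => t - f t * t - t * f t) b + cfcₙ (fun t : ℝ => f t * t * f t) b :=
      cfcₙ_add _ _ b ((continuous_id.sub cft).sub ctf).continuousOn (by simp [hf0])
        cftf.continuousOn (by simp [hf0])
    have e3 : cfcₙ (fun t : ℝ => t - f t * t - t * f t) b
        = cfcₙ (fun t : ℝ => t - f t * t) b - cfcₙ (fun t : ℝ => t * f t) b :=
      cfcₙ_sub _ _ b (continuous_id.sub cft).continuousOn (by simp [hf0])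
        ctf.continuousOn (by simp [hf0])
    have e4 : cfcₙ (fun t : ℝ => t - f t * t) b
        = cfcₙ (fun t : ℝ => t) b - cfcₙ (fun t : ℝ => f t * t) b :=
      cfcₙ_sub _ _ b continuous_id.continuousOn rfl cft.continuousOn (by simp [hf0])
    rw [e1, e2, e3, e4, cfcₙ_id' ℝ b, h1, h2, h3]
  have hXle : ‖b - e * b - b * e + e * b * e‖ ≤ δ := hkey ▸ hgnorm
  have he₁sa : IsSelfAdjoint ((e : Unitization ℂ A)) := by
    rw [IsSelfAdjoint, ← Unitization.inr_star, he_sa.star_eq]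
  have h1e : IsSelfAdjoint (1 - (e : Unitization ℂ A)) := (IsSelfAdjoint.one _).sub he₁sa
  have hconj : ((b - e * b - b * e + e * b * e : A) : Unitization ℂ A)
      = (1 - (e : Unitization ℂ A)) * b * (1 - (e : Unitization ℂ A)) := by
    simp only [Unitization.inr_sub, Unitization.inr_add, Unitization.inr_mul]
    noncomm_ring
  -- the key estimate
  have key : ∀ c : A, (c : Unitization ℂ A) * star (c : Unitization ℂ A) ≤ (b : Unitization ℂ A) →
      ‖c - e * c‖ ≤ η / 3 := by
    intro c hc
    set x : Unitization ℂ A := (1 - (e : Unitization ℂ A)) * c with hxdef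
    have hx : x = ((c - e * c : A) : Unitization ℂ A) := by
      simp only [Unitization.inr_sub, Unitization.inr_mul, hxdef, sub_mul, one_mul]
    have hxs : x * star x
        = (1 - (e : Unitization ℂ A)) * ((c : Unitization ℂ A) * star (c : Unitization ℂ A))
          * (1 - (e : Unitization ℂ A)) := by
      rw [hxdef, star_mul, h1e.star_eq]
      simp only [mul_assoc]
    have h5 : x * star x ≤ (1 - (e : Unitization ℂ A)) * b * (1 - (e : Unitization ℂ A)) := by
      rw [hxs]; exact h1e.conjugate_le_conjugate hc
    have h6 : ‖x * star x‖ ≤ δ := by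
      refine (CStarAlgebra.norm_le_norm_of_nonneg_of_le (mul_star_self_nonneg x) h5).trans ?_
      rw [← hconj, Unitization.norm_inr]
      exact hXle
    have h7 : ‖c - e * c‖ * ‖c - e * c‖ ≤ δ := by
      rw [← Unitization.norm_inr (𝕜 := ℂ) (c - e * c), ← hx, ← CStarRing.norm_self_mul_star]
      exact h6
    nlinarith [norm_nonneg (c - e * c), hη]
  -- membership facts
  have hmem : ∀ a ∈ F, ((a : Unitization ℂ A) * star (a : Unitization ℂ A)
        ≤ (b : Unitization ℂ A))
      ∧ (star (a : Unitization ℂ A) * (a : Unitization ℂ A) ≤ (b : Unitization ℂ A)) := by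
    intro a ha
    have hsplit : (b : Unitization ℂ A)
        = (star (a : Unitization ℂ A) * a + (a : Unitization ℂ A) * star (a : Unitization ℂ A))
          + ∑ x ∈ F.erase a,
            (star (x : Unitization ℂ A) * x + (x : Unitization ℂ A) * star (x : Unitization ℂ A)) := by
      rw [hb₁sum, ← Finset.add_sum_erase _ _ ha]
    have hsum0 : (0 : Unitization ℂ A) ≤ ∑ x ∈ F.erase a,
        (star (x : Unitization ℂ A) * x + (x : Unitization ℂ A) * star (x : Unitization ℂ A)) :=
      Finset.sum_nonneg fun x _ => add_nonneg (star_mul_self_nonneg _) (mul_star_self_nonneg _)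
    constructor
    · rw [← sub_nonneg]
      have : (b : Unitization ℂ A) - (a : Unitization ℂ A) * star (a : Unitization ℂ A)
          = star (a : Unitization ℂ A) * a + ∑ x ∈ F.erase a,
            (star (x : Unitization ℂ A) * x + (x : Unitization ℂ A) * star (x : Unitization ℂ A)) := by
        rw [hsplit]; abel
      rw [this]
      exact add_nonneg (star_mul_self_nonneg _) hsum0
    · rw [← sub_nonneg]
      have : (b : Unitization ℂ A) - star (a : Unitization ℂ A) * (a : Unitization ℂ A)
          = (a : Unitization ℂ A) * star (a : Unitization ℂ A) + ∑ x ∈ F.erase a,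
            (star (x : Unitization ℂ A) * x + (x : Unitization ℂ A) * star (x : Unitization ℂ A)) := by
        rw [hsplit]; abel
      rw [this]
      exact add_nonneg (mul_star_self_nonneg _) hsum0
  refine ⟨e, he_sa.star_eq, he_norm, fun a ha => ?_⟩
  have k1 : ‖a - e * a‖ ≤ η / 3 := key a (hmem a ha).1
  have k2 : ‖star a - e * star a‖ ≤ η / 3 := by
    refine key (star a) ?_
    simpa [Unitization.inr_star] using (hmem a ha).2
  have k3 : ‖a * e - a‖ ≤ η / 3 := by
    rw [← norm_star, star_sub, star_mul, he_sa.star_eq, ← norm_sub_rev]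
    exact k2
  have k1' : ‖e * a - a‖ ≤ η / 3 := by rw [norm_sub_rev]; exact k1
  have n1 : ‖e * (a * e - a)‖ ≤ η / 3 := by
    refine (norm_mul_le _ _).trans ?_
    calc ‖e‖ * ‖a * e - a‖ ≤ 1 * ‖a * e - a‖ :=
          mul_le_mul_of_nonneg_right he_norm (norm_nonneg _)
      _ = ‖a * e - a‖ := one_mul _
      _ ≤ η / 3 := k3
  have hsplit2 : e * a * e - a = e * (a * e - a) + (e * a - a) := by noncomm_ring
  calc ‖e * a * e - a‖ = ‖e * (a * e - a) + (e * a - a)‖ := by rw [hsplit2]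
    _ ≤ ‖e * (a * e - a)‖ + ‖e * a - a‖ := norm_add_le _ _
    _ ≤ η / 3 + η / 3 := add_le_add n1 k1'
    _ < η := by linarith

section MvN

variable {A : Type u} {B : Type v} [NonUnitalCStarAlgebra A] [NonUnitalCStarAlgebra B]

/-- Two *-homomorphisms `φ, ψ : A → B` are approximately Murray–von Neumann equivalent if
for every finite `F ⊆ A` and `ε > 0` there is `u ∈ B` with `‖u* φ(a) u - ψ(a)‖ < ε` and
`‖u ψ(a) u* - φ(a)‖ < ε` for all `a ∈ F`. -/
def ApproxMvNEquiv (φ ψ : A →⋆ₙₐ[ℂ] B) : Prop :=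
  ∀ (F : Finset A) (ε : ℝ), 0 < ε → ∃ u : B,
    ∀ a ∈ F, ‖star u * φ a * u - ψ a‖ < ε ∧ ‖u * ψ a * star u - φ a‖ < ε

end MvN

/-- If `φ, ψ : A → B` are approximately Murray–von Neumann equivalent
*-homomorphisms, the implementing elements `u` can always be chosen to be contractions. -/
theorem approxMvNEquiv_contractive
    {A : Type u} {B : Type v} [NonUnitalCStarAlgebra A] [NonUnitalCStarAlgebra B]
    (φ ψ : A →⋆ₙₐ[ℂ] B) (h : ApproxMvNEquiv φ ψ) :
    ∀ (F : Finset A) (ε : ℝ), 0 < ε → ∃ u : B, ‖u‖ ≤ 1 ∧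
      ∀ a ∈ F, ‖star u * φ a * u - ψ a‖ < ε ∧ ‖u * ψ a * star u - φ a‖ < ε := by
  classical
  intro F ε hε
  set M : ℝ := 1 + ∑ a ∈ F, ‖a‖ with hMdef
  have hsum0 : (0:ℝ) ≤ ∑ a ∈ F, ‖a‖ := Finset.sum_nonneg fun _ _ => norm_nonneg _
  have hM1 : 1 ≤ M := by simp only [hMdef]; linarith
  have hMa : ∀ a ∈ F, ‖a‖ ≤ M := fun a ha => by
    have := Finset.single_le_sum (f := fun a : A => ‖a‖) (fun x _ => norm_nonneg x) ha
    simp only [hMdef]; linarith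
  set δ : ℝ := min (1/2) (ε / (4 * (M + 1))) with hδdef
  have hδpos : 0 < δ := lt_min (by norm_num) (by positivity)
  have hδhalf : δ ≤ 1/2 := min_le_left _ _
  have hδε : δ * (M + 1) ≤ ε / 4 := by
    have h2 : δ ≤ ε / (4 * (M + 1)) := min_le_right _ _
    have h3 : δ * (M + 1) ≤ (ε / (4 * (M + 1))) * (M + 1) :=
      mul_le_mul_of_nonneg_right h2 (by linarith)
    calc δ * (M + 1) ≤ (ε / (4 * (M + 1))) * (M + 1) := h3
      _ = ε / 4 := by field_simp
  obtain ⟨e, hse, hne, heF⟩ := exists_sa_contraction_approx_unit F (show (0:ℝ) < ε/4 by linarith)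
  set t : ℝ := Real.sqrt (1 - δ) with htdef
  have ht0 : 0 ≤ t := Real.sqrt_nonneg _
  have ht2 : t ^ 2 = 1 - δ := Real.sq_sqrt (by linarith)
  have ht1 : t ≤ 1 := by nlinarith
  set e' : A := t • e with he'def
  have hse' : star e' = e' := by
    rw [he'def, star_smul, star_trivial, hse]
  have hne' : ‖e'‖ ≤ t := by
    rw [he'def, norm_smul, Real.norm_eq_abs, abs_of_nonneg ht0]
    calc t * ‖e‖ ≤ t * 1 := mul_le_mul_of_nonneg_left hne ht0
      _ = t := mul_one t
  have he'ae' : ∀ a ∈ F, ‖e' * a * e' - a‖ ≤ ε/4 + δ * M := by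
    intro a ha
    have h1 : e' * a * e' = (1 - δ) • (e * a * e) := by
      rw [he'def]
      rw [smul_mul_assoc, smul_mul_assoc, mul_smul_comm, smul_smul, ← sq, ht2]
    have h2 : e' * a * e' - a = (1 - δ) • (e * a * e - a) - δ • a := by
      rw [h1]; module
    rw [h2]
    calc ‖(1 - δ) • (e * a * e - a) - δ • a‖
        ≤ ‖(1 - δ) • (e * a * e - a)‖ + ‖δ • a‖ := norm_sub_le _ _
      _ = (1 - δ) * ‖e * a * e - a‖ + δ * ‖a‖ := by
          rw [norm_smul, norm_smul, Real.norm_eq_abs, Real.norm_eq_abs,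
            abs_of_nonneg (by linarith), abs_of_nonneg hδpos.le]
      _ ≤ 1 * (ε/4) + δ * M := by
          have := (heF a ha).le
          have := hMa a ha
          have h1δ : 1 - δ ≤ 1 := by linarith
          have hn : (0:ℝ) ≤ ‖e * a * e - a‖ := norm_nonneg _
          nlinarith
      _ = ε/4 + δ * M := by ring
  set F' : Finset A := insert (e' * e') (F ∪ F.image (fun a => e' * a * e')) with hF'def
  obtain ⟨u, hu⟩ := h F' δ hδpos
  set v : B := u * ψ e' with hvdef
  have hψe' : star (ψ e') = ψ e' := by rw [← map_star, hse']
  have hψe'n : ‖ψ e'‖ ≤ 1 := (NonUnitalStarAlgHom.norm_apply_le ψ e').trans (hne'.trans ht1)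
  have hsv : star v = ψ e' * star u := by rw [hvdef, star_mul, hψe']
  have hvv : v * star v = u * ψ (e' * e') * star u := by
    rw [hvdef, hsv, map_mul]; simp only [mul_assoc]
  have huee := (hu (e' * e') (Finset.mem_insert_self _ _)).2
  have hv1 : ‖v‖ ≤ 1 := by
    have h1 : ‖v * star v‖ ≤ δ + ‖φ (e' * e')‖ := by
      rw [hvv]
      have := norm_add_le (u * ψ (e' * e') * star u - φ (e' * e')) (φ (e' * e'))
      simp only [sub_add_cancel] at this
      linarith [huee.le]
    have h2 : ‖φ (e' * e')‖ ≤ 1 - δ := by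
      refine (NonUnitalStarAlgHom.norm_apply_le φ _).trans ?_
      calc ‖e' * e'‖ ≤ ‖e'‖ * ‖e'‖ := norm_mul_le _ _
        _ ≤ t * t := mul_le_mul hne' hne' (norm_nonneg _) ht0
        _ = 1 - δ := by rw [← ht2]; ring
    have h3 : ‖v‖ * ‖v‖ ≤ 1 := by rw [← CStarRing.norm_self_mul_star]; linarith
    nlinarith [norm_nonneg v]
  have hsand : ∀ X : B, ‖ψ e' * X * ψ e'‖ ≤ ‖X‖ := fun X => by
    calc ‖ψ e' * X * ψ e'‖ ≤ ‖ψ e' * X‖ * ‖ψ e'‖ := norm_mul_le _ _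
      _ ≤ (‖ψ e'‖ * ‖X‖) * ‖ψ e'‖ :=
          mul_le_mul_of_nonneg_right (norm_mul_le _ _) (norm_nonneg _)
      _ ≤ ‖X‖ * ‖ψ e'‖ :=
          mul_le_mul_of_nonneg_right (mul_le_of_le_one_left (norm_nonneg _) hψe'n)
            (norm_nonneg _)
      _ ≤ ‖X‖ := mul_le_of_le_one_right (norm_nonneg _) hψe'n
  refine ⟨v, hv1, fun a ha => ?_⟩
  have haF' : a ∈ F' := Finset.mem_insert_of_mem (Finset.mem_union_left _ ha)
  have haeF' : e' * a * e' ∈ F' :=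
    Finset.mem_insert_of_mem (Finset.mem_union_right _ (Finset.mem_image_of_mem _ ha))
  obtain ⟨hu1, hu2⟩ := hu a haF'
  obtain ⟨hu3, hu4⟩ := hu (e' * a * e') haeF'
  have hfinal : δ + (ε/4 + δ * M) < ε := by
    have hh : δ * M + δ ≤ ε / 4 := by linarith [hδε, mul_add δ M 1, mul_one δ]
    linarith
  constructor
  · have hd : star v * φ a * v
        = ψ e' * (star u * φ a * u - ψ a) * ψ e' + ψ (e' * a * e') := by
      rw [hsv, hvdef, map_mul, map_mul]
      noncomm_ring
    have hd2 : star v * φ a * v - ψ a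
        = ψ e' * (star u * φ a * u - ψ a) * ψ e' + (ψ (e' * a * e') - ψ a) := by
      rw [hd]; abel
    rw [hd2]
    calc ‖ψ e' * (star u * φ a * u - ψ a) * ψ e' + (ψ (e' * a * e') - ψ a)‖
        ≤ ‖ψ e' * (star u * φ a * u - ψ a) * ψ e'‖ + ‖ψ (e' * a * e') - ψ a‖ := norm_add_le _ _
      _ ≤ ‖star u * φ a * u - ψ a‖ + ‖e' * a * e' - a‖ := by
          refine add_le_add (hsand _) ?_
          rw [← map_sub]
          exact NonUnitalStarAlgHom.norm_apply_le ψ _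
      _ < δ + (ε/4 + δ * M) := add_lt_add_of_lt_of_le hu1 (he'ae' a ha)
      _ < ε := hfinal
  · have hd : v * ψ a * star v = u * ψ (e' * a * e') * star u := by
      rw [hvdef, hsv, map_mul, map_mul]
      simp only [mul_assoc]
    have hd2 : v * ψ a * star v - φ a
        = (u * ψ (e' * a * e') * star u - φ (e' * a * e')) + (φ (e' * a * e') - φ a) := by
      rw [hd]; abel
    rw [hd2]
    calc ‖(u * ψ (e' * a * e') * star u - φ (e' * a * e')) + (φ (e' * a * e') - φ a)‖
        ≤ ‖u * ψ (e' * a * e') * star u - φ (e' * a * e')‖ + ‖φ (e' * a * e') - φ a‖ :=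
          norm_add_le _ _
      _ ≤ ‖u * ψ (e' * a * e') * star u - φ (e' * a * e')‖ + ‖e' * a * e' - a‖ := by
          refine add_le_add le_rfl ?_
          rw [← map_sub]
          exact NonUnitalStarAlgHom.norm_apply_le φ _
      _ < δ + (ε/4 + δ * M) := add_lt_add_of_lt_of_le hu4 (he'ae' a ha)
      _ < ε := hfinal
end

section
/- Let φ, ψ: A → D be *-homomorphisms between C*-algebras, and suppose v ∈ D is a contraction such that v*φ(a)v = ψ(a) for all a ∈ A. Then: (i) vv* commutes with φ(a) for every a ∈ A; (ii) v*v ψ(a) = ψ(a) for every a ∈ A; and (iii) φ(a)v = v ψ(a) for every a ∈ A. -/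
universe u v

/-- If `φ, ψ : A → D` are *-homomorphisms and `v ∈ D` is a contraction
with `v* φ(a) v = ψ(a)` for all `a`, then: (i) `v v*` commutes with every `φ(a)`;
(ii) `v* v ψ(a) = ψ(a)`; (iii) `φ(a) v = v ψ(a)`. -/
theorem conj_by_contraction_properties
    {A : Type u} {D : Type v} [NonUnitalCStarAlgebra A] [NonUnitalCStarAlgebra D]
    (φ ψ : A →⋆ₙₐ[ℂ] D) (v : D) (hv : ‖v‖ ≤ 1)
    (h : ∀ a : A, star v * φ a * v = ψ a) :
    (∀ a : A, Commute (v * star v) (φ a)) ∧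
    (∀ a : A, star v * v * ψ a = ψ a) ∧
    (∀ a : A, φ a * v = v * ψ a) := by
  have key : ∀ a : A, φ a * v = v * ψ a := by
    intro a
    let ι : D →⋆ₙₐ[ℂ] Unitization ℂ D := Unitization.inrNonUnitalStarAlgHom ℂ D
    have hinj : Function.Injective ι := Unitization.inr_injective
    set w : Unitization ℂ D := ι v with hw
    have hle : star w * w ≤ 1 := by
      rw [← CStarAlgebra.norm_le_one_iff_of_nonneg _ (star_mul_self_nonneg w)]
      calc ‖star w * w‖ ≤ ‖star w‖ * ‖w‖ := norm_mul_le _ _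
        _ ≤ 1 := by
            rw [norm_star]
            have hwv : ‖w‖ = ‖v‖ := Unitization.norm_inr v
            nlinarith [norm_nonneg w]
    have h' : ∀ b : A, star w * ι (φ b) * w = ι (ψ b) := by
      intro b
      rw [hw, ← map_star, ← map_mul, ← map_mul, h]
    set p : Unitization ℂ D := ι (φ a) with hp
    set q : Unitization ℂ D := ι (ψ a) with hq
    have f1 : star w * p * w = q := h' a
    have f2 : star w * star p * w = star q := by
      have := h' (star a)
      rwa [map_star, map_star, map_star, map_star] at this
    have f3 : star w * (star p * p) * w = star q * q := by
      have h3 := h' (star a * a)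
      simp only [map_mul, map_star] at h3
      exact h3
    set x : Unitization ℂ D := p * w - w * q with hx
    have hxx : star x * x = star q * (star w * w) * q - star q * q := by
      have expand : star x * x = star w * star p * (p * w) - star w * star p * (w * q)
          - star q * star w * (p * w) + star q * star w * (w * q) := by
        rw [hx]; simp only [star_sub, star_mul, star_star]; noncomm_ring
      rw [expand,
        show star w * star p * (p * w) = star w * (star p * p) * w by noncomm_ring, f3,
        show star w * star p * (w * q) = (star w * star p * w) * q by noncomm_ring, f2,
        show star q * star w * (p * w) = star q * (star w * p * w) by noncomm_ring, f1,
        show star q * star w * (w * q) = star q * (star w * w) * q by noncomm_ring]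
      abel
    have hle2 : star x * x ≤ 0 := by
      rw [hxx, sub_nonpos]
      calc star q * (star w * w) * q ≤ star q * 1 * q := star_left_conjugate_le_conjugate hle q
        _ = star q * q := by rw [mul_one]
    have hx0 : x = 0 := by
      rw [← CStarRing.star_mul_self_eq_zero_iff x]
      exact le_antisymm hle2 (star_mul_self_nonneg x)
    have : ι (φ a * v) = ι (v * ψ a) := by
      rw [map_mul, map_mul]
      rw [hx, sub_eq_zero] at hx0
      exact hx0
    exact hinj this
  have key' : ∀ a : A, star v * φ a = ψ a * star v := by
    intro a
    have := congrArg star (key (star a))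
    rwa [star_mul, star_mul, map_star, map_star, star_star, star_star] at this
  refine ⟨fun a => ?_, fun a => ?_, key⟩
  · show v * star v * φ a = φ a * (v * star v)
    rw [mul_assoc, key', ← mul_assoc, ← key, mul_assoc]
  · rw [mul_assoc, ← key, ← mul_assoc, h]
end

section
/- Let A and B be C*-algebras with A separable and B unital, and let φ, ψ: A → B_∞ be continuous maps. If φ and ψ are approximately unitarily equivalent with unitaries in B_∞, then they are unitarily equivalent: there exists a unitary v ∈ B_∞ such that v*φ(a)v = ψ(a) for all a ∈ A. -/
open Filter Topology BoundedContinuousFunction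

universe u v

namespace SeqAlg

variable (B : Type u) [NonUnitalCStarAlgebra B]

/-- The ideal `⊕_ℕ B = c₀(ℕ, B)` of norm-null sequences inside `∏_ℕ B = ℓ^∞(ℕ, B)`
(bounded sequences in `B`), as an additive subgroup. -/
noncomputable def nullSeq : AddSubgroup (ℕ →ᵇ B) where
  carrier := {f | Tendsto (fun n => f n) atTop (nhds (0 : B))}
  zero_mem' := by simpa using (tendsto_const_nhds : Tendsto (fun _ : ℕ => (0 : B)) atTop _)
  add_mem' := fun hf hg => by simpa using Filter.Tendsto.add hf hg
  neg_mem' := fun hf => by simpa using Filter.Tendsto.neg hf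

/-- The sequence algebra `B_∞ := (∏_ℕ B)/(⊕_ℕ B)`, as a quotient of the additive group of
`ℓ^∞(ℕ, B)` by the norm-null sequences; it carries the quotient (semi)norm. -/
abbrev SeqAlgebra := (ℕ →ᵇ B) ⧸ nullSeq B

/-- The quotient map `∏_ℕ B → B_∞`. -/
noncomputable def mkSeq : (ℕ →ᵇ B) → SeqAlgebra B := QuotientAddGroup.mk

variable {B}

lemma mkSeq_eq_iff {f g : ℕ →ᵇ B} : mkSeq B f = mkSeq B g ↔ -f + g ∈ nullSeq B :=
  QuotientAddGroup.eq

lemma null_mul_mem {h f : ℕ →ᵇ B} (hh : h ∈ nullSeq B) : h * f ∈ nullSeq B := by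
  have hb : ∀ n, ‖h n * f n‖ ≤ ‖f‖ * ‖h n‖ := fun n => by
    calc ‖h n * f n‖ ≤ ‖h n‖ * ‖f n‖ := norm_mul_le _ _
    _ ≤ ‖h n‖ * ‖f‖ := by
        exact mul_le_mul_of_nonneg_left (f.norm_coe_le_norm n) (norm_nonneg _)
    _ = ‖f‖ * ‖h n‖ := mul_comm _ _
  have h0 : Tendsto (fun n => ‖f‖ * ‖h n‖) atTop (nhds 0) := by
    have := (Filter.Tendsto.norm hh).const_mul ‖f‖
    simpa using this
  have : Tendsto (fun n => h n * f n) atTop (nhds 0) := squeeze_zero_norm hb h0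
  exact this

lemma mul_null_mem {f h : ℕ →ᵇ B} (hh : h ∈ nullSeq B) : f * h ∈ nullSeq B := by
  have hb : ∀ n, ‖f n * h n‖ ≤ ‖f‖ * ‖h n‖ := fun n => by
    calc ‖f n * h n‖ ≤ ‖f n‖ * ‖h n‖ := norm_mul_le _ _
    _ ≤ ‖f‖ * ‖h n‖ := by
        exact mul_le_mul_of_nonneg_right (f.norm_coe_le_norm n) (norm_nonneg _)
  have h0 : Tendsto (fun n => ‖f‖ * ‖h n‖) atTop (nhds 0) := by
    have := (Filter.Tendsto.norm hh).const_mul ‖f‖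
    simpa using this
  have : Tendsto (fun n => f n * h n) atTop (nhds 0) := squeeze_zero_norm hb h0
  exact this

/-- Multiplication on `B_∞`, induced by pointwise multiplication of sequences. -/
noncomputable instance : Mul (SeqAlgebra B) :=
  ⟨fun x y => Quotient.liftOn₂' x y (fun f g => mkSeq B (f * g)) (by
    intro f g f' g' hf hg
    rw [QuotientAddGroup.leftRel_apply] at hf hg
    have key : -(f * g) + f' * g' = (-f + f') * g + f' * (-g + g') := by noncomm_ring
    refine (mkSeq_eq_iff).mpr ?_
    rw [key]
    exact (nullSeq B).add_mem (null_mul_mem hf) (mul_null_mem hg))⟩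

lemma mkSeq_mul (f g : ℕ →ᵇ B) : mkSeq B f * mkSeq B g = mkSeq B (f * g) := rfl

/-- The involution on `B_∞`, induced by the pointwise involution of sequences. -/
noncomputable instance : Star (SeqAlgebra B) :=
  ⟨fun x => Quotient.liftOn' x (fun f => mkSeq B (star f)) (by
    intro f f' hf
    rw [QuotientAddGroup.leftRel_apply] at hf
    refine (mkSeq_eq_iff).mpr ?_
    have key : -star f + star f' = star (-f + f') := by simp [star_add, star_neg]
    rw [key]
    have : Tendsto (fun n => star ((-f + f') n)) atTop (nhds (0 : B)) := by
      simpa using Filter.Tendsto.star hf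
    exact this)⟩

lemma mkSeq_star (f : ℕ →ᵇ B) : star (mkSeq B f) = mkSeq B (star f) := rfl

/-- The `ℂ`-scalar multiplication on `B_∞`. -/
noncomputable instance : SMul ℂ (SeqAlgebra B) :=
  ⟨fun c x => Quotient.liftOn' x (fun f => mkSeq B (c • f)) (by
    intro f f' hf
    rw [QuotientAddGroup.leftRel_apply] at hf
    refine (mkSeq_eq_iff).mpr ?_
    have key : -(c • f) + c • f' = c • (-f + f') := by module
    rw [key]
    have : Tendsto (fun n => c • ((-f + f') n)) atTop (nhds (0 : B)) := by
      simpa using Filter.Tendsto.const_smul hf c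
    exact this)⟩

variable (B) in
/-- The canonical inclusion `B ⊆ B_∞` by constant sequences. -/
noncomputable def const (b : B) : SeqAlgebra B :=
  mkSeq B (BoundedContinuousFunction.const ℕ b)

variable (B) in
/-- The *-endomorphism `η* : B_∞ → B_∞` induced by a map `η : ℕ → ℕ` with `η(k) → ∞`,
`η*[(b₁, b₂, …)] = [(b_{η 1}, b_{η 2}, …)]`. -/
noncomputable def etaStar (η : ℕ → ℕ) (hη : Tendsto η atTop atTop) (x : SeqAlgebra B) :
    SeqAlgebra B :=
  Quotient.liftOn' x
    (fun f => mkSeq B (f.compContinuous ⟨η, continuous_of_discreteTopology⟩)) (by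
    intro f f' hf
    rw [QuotientAddGroup.leftRel_apply] at hf
    refine (mkSeq_eq_iff).mpr ?_
    have key : -(f.compContinuous ⟨η, continuous_of_discreteTopology⟩)
        + f'.compContinuous ⟨η, continuous_of_discreteTopology⟩
        = (-f + f').compContinuous ⟨η, continuous_of_discreteTopology⟩ := by
      ext n; simp
    rw [key]
    have : Tendsto (fun n => (-f + f') (η n)) atTop (nhds (0 : B)) := by
      exact Filter.Tendsto.comp hf hη
    exact this)

lemma mem_nullSeq {f : ℕ →ᵇ B} :
    f ∈ nullSeq B ↔ Tendsto (fun n => f n) atTop (nhds (0 : B)) := Iff.rfl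

lemma surjective_mkSeq : Function.Surjective (mkSeq B) :=
  QuotientAddGroup.mk_surjective

lemma mkSeq_sub (f g : ℕ →ᵇ B) : mkSeq B (f - g) = mkSeq B f - mkSeq B g := rfl

lemma isClosed_nullSeq : IsClosed ((nullSeq B : AddSubgroup (ℕ →ᵇ B)) : Set (ℕ →ᵇ B)) := by
  refine isClosed_of_closure_subset ?_
  intro f hf
  rw [SetLike.mem_coe, mem_nullSeq, NormedAddCommGroup.tendsto_nhds_zero]
  intro ε hε
  rw [Metric.mem_closure_iff] at hf
  obtain ⟨g, hg, hdist⟩ := hf (ε / 2) (by positivity)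
  rw [SetLike.mem_coe, mem_nullSeq, NormedAddCommGroup.tendsto_nhds_zero] at hg
  filter_upwards [hg (ε / 2) (by positivity)] with n hn
  have h1 : ‖f n - g n‖ ≤ ‖f - g‖ := by
    simpa using (f - g).norm_coe_le_norm n
  have h2 : ‖f - g‖ = dist f g := by rw [dist_eq_norm]
  have h3 : ‖f n - g n‖ < ε / 2 := h1.trans_lt (h2 ▸ hdist)
  calc ‖f n‖ = ‖(f n - g n) + g n‖ := by rw [sub_add_cancel]
  _ ≤ ‖f n - g n‖ + ‖g n‖ := norm_add_le _ _
  _ < ε / 2 + ε / 2 := add_lt_add h3 hn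
  _ = ε := by ring

lemma seq_eq_zero_of_norm {x : SeqAlgebra B} (hx : ‖x‖ = 0) : x = 0 := by
  obtain ⟨w, rfl⟩ := surjective_mkSeq x
  exact (QuotientAddGroup.eq_zero_iff w).mpr
    (QuotientAddGroup.norm_mk_eq_zero (hS := isClosed_nullSeq).mp hx)

lemma seq_norm_mul_le (x y : SeqAlgebra B) : ‖x * y‖ ≤ ‖x‖ * ‖y‖ := by
  have key : ∀ ε > (0:ℝ), ‖x * y‖ ≤ (‖x‖ + ε) * (‖y‖ + ε) := by
    intro ε hε
    obtain ⟨f, hfx, hf⟩ := QuotientAddGroup.exists_norm_mk_lt x hε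
    obtain ⟨g, hgy, hg⟩ := QuotientAddGroup.exists_norm_mk_lt y hε
    have hxy : x * y = mkSeq B (f * g) := by
      rw [← hfx, ← hgy]; rfl
    calc ‖x * y‖ ≤ ‖f * g‖ := by rw [hxy]; exact QuotientAddGroup.norm_mk_le_norm
    _ ≤ ‖f‖ * ‖g‖ := norm_mul_le _ _
    _ ≤ (‖x‖ + ε) * (‖y‖ + ε) := by
        exact mul_le_mul hf.le hg.le (norm_nonneg _) (by positivity)
  have hT : Tendsto (fun ε : ℝ => (‖x‖ + ε) * (‖y‖ + ε)) (nhdsWithin 0 (Set.Ioi 0))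
      (nhds (‖x‖ * ‖y‖)) := by
    have : Continuous (fun ε : ℝ => (‖x‖ + ε) * (‖y‖ + ε)) := by continuity
    have h2 : Tendsto (fun ε : ℝ => (‖x‖ + ε) * (‖y‖ + ε)) (nhdsWithin 0 (Set.Ioi 0))
        (nhds ((‖x‖ + 0) * (‖y‖ + 0))) :=
      (this.tendsto 0).mono_left nhdsWithin_le_nhds
    simpa using h2
  refine ge_of_tendsto hT ?_
  filter_upwards [self_mem_nhdsWithin] with ε hε
  exact key ε hε

lemma eventually_norm_lt_of {w : ℕ →ᵇ B} {c : ℝ} (hc : ‖mkSeq B w‖ < c) :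
    ∀ᶠ n in atTop, ‖w n‖ < 2 * c := by
  have hc0 : 0 < c := lt_of_le_of_lt (norm_nonneg _) hc
  obtain ⟨s, hs, hns⟩ := QuotientAddGroup.exists_norm_add_lt (nullSeq B) w (sub_pos.mpr hc)
  have hns' : ‖w + s‖ < c := by
    have : ‖QuotientAddGroup.mk' (nullSeq B) w‖ = ‖mkSeq B w‖ := rfl
    rw [this] at hns; linarith
  rw [mem_nullSeq, NormedAddCommGroup.tendsto_nhds_zero] at hs
  filter_upwards [hs c hc0] with n hn
  have : ‖(w + s) n‖ ≤ ‖w + s‖ := (w + s).norm_coe_le_norm n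
  have h2 : w n = (w + s) n - s n := by simp
  calc ‖w n‖ = ‖(w + s) n - s n‖ := by rw [← h2]
  _ ≤ ‖(w + s) n‖ + ‖s n‖ := norm_sub_le _ _
  _ < c + c := add_lt_add_of_le_of_lt (le_trans this hns'.le) hn
  _ = 2 * c := by ring

lemma seq_conj_sub (v x y : SeqAlgebra B) :
    star v * x * v - star v * y * v = star v * (x - y) * v := by
  obtain ⟨f, rfl⟩ := surjective_mkSeq v
  obtain ⟨p, rfl⟩ := surjective_mkSeq x
  obtain ⟨q, rfl⟩ := surjective_mkSeq y
  simp only [mkSeq_star, mkSeq_mul, ← mkSeq_sub]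
  congr 1
  noncomm_ring

end SeqAlg

set_option maxHeartbeats 2000000 in
open SeqAlg in
/-- Let `A` be separable, `B` unital, and `φ, ψ : A → B_∞` continuous
maps. If `φ` and `ψ` are approximately unitarily equivalent with unitaries in `B_∞`, then
they are unitarily equivalent: there is a unitary `v ∈ B_∞` with `v* φ(a) v = ψ(a)` for
all `a ∈ A`. -/
theorem approxUnitaryEquiv_to_unitaryEquiv_in_seqAlgebra
    {A : Type v} {B : Type u} [NonUnitalCStarAlgebra A] [CStarAlgebra B]
    [TopologicalSpace.SeparableSpace A]
    (φ ψ : A → SeqAlgebra B) (hφ : Continuous φ) (hψ : Continuous ψ)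
    (h : ∀ (F : Finset A) (ε : ℝ), 0 < ε → ∃ u : SeqAlgebra B,
      star u * u = mkSeq B 1 ∧ u * star u = mkSeq B 1 ∧
      ∀ a ∈ F, ‖star u * φ a * u - ψ a‖ < ε) :
    ∃ v : SeqAlgebra B,
      star v * v = mkSeq B 1 ∧ v * star v = mkSeq B 1 ∧
      ∀ a : A, star v * φ a * v = ψ a := by
  haveI : Nonempty A := ⟨0⟩
  classical
  set d : ℕ → A := TopologicalSpace.denseSeq A with hd_def
  have hd : DenseRange d := TopologicalSpace.denseRange_denseSeq A
  -- Step 1: for each k, a unitary working on d 0, …, d k up to 1/(k+1)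
  have hu : ∀ k : ℕ, ∃ u : SeqAlgebra B, star u * u = mkSeq B 1 ∧ u * star u = mkSeq B 1 ∧
      ∀ m ≤ k, ‖star u * φ (d m) * u - ψ (d m)‖ < 1 / (k + 1) := by
    intro k
    obtain ⟨u, h1, h2, h3⟩ := h ((Finset.range (k + 1)).image d) (1 / (k + 1)) (by positivity)
    refine ⟨u, h1, h2, fun m hm => h3 _ ?_⟩
    exact Finset.mem_image.mpr ⟨m, Finset.mem_range.mpr (Nat.lt_succ_of_le hm), rfl⟩
  choose u hu1 hu2 hu3 using hu
  choose g hg using fun k => surjective_mkSeq (u k)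
  choose p hp using fun m => surjective_mkSeq (φ (d m))
  choose q hq using fun m => surjective_mkSeq (ψ (d m))
  -- Step 2: translate to sequence-level eventual estimates
  have A1 : ∀ k, Tendsto (fun n => star (g k n) * g k n - 1) atTop (nhds (0 : B)) := by
    intro k
    have e1 : mkSeq B (star (g k) * g k) = mkSeq B 1 := by
      rw [← mkSeq_mul, ← mkSeq_star, hg, hu1]
    have hmem := mkSeq_eq_iff.mp e1
    rw [mem_nullSeq] at hmem
    have h2 : Tendsto (fun n => -1 + star (g k n) * g k n) atTop (nhds (0 : B)) := by
      simpa using hmem.neg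
    simpa [neg_add_eq_sub] using h2
  have A2 : ∀ k, Tendsto (fun n => g k n * star (g k n) - 1) atTop (nhds (0 : B)) := by
    intro k
    have e1 : mkSeq B (g k * star (g k)) = mkSeq B 1 := by
      rw [← mkSeq_mul, ← mkSeq_star, hg, hu2]
    have hmem := mkSeq_eq_iff.mp e1
    rw [mem_nullSeq] at hmem
    have h2 : Tendsto (fun n => -1 + g k n * star (g k n)) atTop (nhds (0 : B)) := by
      simpa using hmem.neg
    simpa [neg_add_eq_sub] using h2
  have A3 : ∀ k m, m ≤ k → ∀ᶠ n in atTop,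
      ‖star (g k n) * p m n * g k n - q m n‖ < 2 * (1 / (k + 1)) := by
    intro k m hm
    have e1 : star (u k) * φ (d m) * u k - ψ (d m)
        = mkSeq B (star (g k) * p m * g k - q m) := by
      rw [← hg, ← hp, ← hq, mkSeq_star, mkSeq_mul, mkSeq_mul, mkSeq_sub]
    have h2 : ‖mkSeq B (star (g k) * p m * g k - q m)‖ < 1 / (k + 1) := e1 ▸ hu3 k m hm
    filter_upwards [eventually_norm_lt_of h2] with n hn
    simpa using hn
  -- Step 3: combine, choose thresholds
  have P : ∀ k, ∀ᶠ n in atTop,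
      (‖star (g k n) * g k n - 1‖ < 1 / (k + 1) ∧ ‖g k n * star (g k n) - 1‖ < 1 / (k + 1)) ∧
      ∀ m ∈ Finset.range (k + 1),
        ‖star (g k n) * p m n * g k n - q m n‖ < 2 * (1 / (k + 1)) := by
    intro k
    have e1 := (NormedAddCommGroup.tendsto_nhds_zero.mp (A1 k)) (1 / (k + 1)) (by positivity)
    have e2 := (NormedAddCommGroup.tendsto_nhds_zero.mp (A2 k)) (1 / (k + 1)) (by positivity)
    have e3 : ∀ᶠ n in atTop, ∀ m ∈ Finset.range (k + 1),
        ‖star (g k n) * p m n * g k n - q m n‖ < 2 * (1 / (k + 1)) :=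
      (Filter.eventually_all_finset _).mpr
        (fun m hm => A3 k m (Nat.lt_succ_iff.mp (Finset.mem_range.mp hm)))
    filter_upwards [e1, e2, e3] with n h1 h2 h3
    exact ⟨⟨h1, h2⟩, h3⟩
  choose N' hN' using fun k => Filter.eventually_atTop.mp (P k)
  set N : ℕ → ℕ := fun k => max (N' k) k with hN_def
  set K : ℕ → ℕ := fun n => sSup {k | k ≤ n ∧ N k ≤ n} with hK_def
  have hbdd : ∀ n : ℕ, BddAbove {k | k ≤ n ∧ N k ≤ n} := fun n => ⟨n, fun x hx => hx.1⟩
  -- the diagonal sequence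
  set C : ℝ := max ‖g 0‖ (max 1 (1 + ‖(1 : B)‖)) with hC_def
  have hbound : ∀ n, ‖g (K n) n‖ ≤ C := by
    intro n
    by_cases hne : ({k | k ≤ n ∧ N k ≤ n} : Set ℕ).Nonempty
    · have hm := Nat.sSup_mem hne (hbdd n)
      have hQn := hN' (K n) n (le_trans (le_max_left _ _) hm.2)
      have h1 : ‖star (g (K n) n) * g (K n) n - 1‖ < 1 := by
        refine hQn.1.1.trans_le ?_
        rw [div_le_one (by positivity)]
        linarith [Nat.cast_nonneg (α := ℝ) (K n)]
      have h2 : ‖star (g (K n) n) * g (K n) n‖ ≤ 1 + ‖(1 : B)‖ := by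
        calc ‖star (g (K n) n) * g (K n) n‖
            = ‖(star (g (K n) n) * g (K n) n - 1) + 1‖ := by rw [sub_add_cancel]
        _ ≤ ‖star (g (K n) n) * g (K n) n - 1‖ + ‖(1 : B)‖ := norm_add_le _ _
        _ ≤ 1 + ‖(1 : B)‖ := by linarith
      have h3 : ‖g (K n) n‖ * ‖g (K n) n‖ ≤ 1 + ‖(1 : B)‖ := by
        rw [← CStarRing.norm_star_mul_self]; exact h2
      by_cases hle : ‖g (K n) n‖ ≤ 1
      · exact le_trans hle (le_max_of_le_right (le_max_left _ _))
      · push_neg at hle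
        have h4 : ‖g (K n) n‖ ≤ ‖g (K n) n‖ * ‖g (K n) n‖ :=
          le_mul_of_one_le_left (norm_nonneg _) hle.le
        exact le_trans (h4.trans h3) (le_max_of_le_right (le_max_right _ _))
    · have hK0 : K n = 0 := by
        rw [hK_def]; simp [Set.not_nonempty_iff_eq_empty.mp hne]
      rw [hK0]
      exact le_max_of_le_left ((g 0).norm_coe_le_norm n)
  set ff : ℕ →ᵇ B := BoundedContinuousFunction.ofNormedAddCommGroup
    (fun n => g (K n) n) continuous_of_discreteTopology C hbound with hff_def
  have hffn : ∀ n, ff n = g (K n) n := fun n => rfl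
  -- eventual structure of K
  have hev : ∀ kk : ℕ, ∀ᶠ n in atTop, kk ≤ K n ∧ N (K n) ≤ n := by
    intro kk
    filter_upwards [eventually_ge_atTop (N kk)] with n hn
    have hkkn : kk ≤ n := le_trans (le_max_right (N' kk) kk) hn
    have hne : ({k | k ≤ n ∧ N k ≤ n} : Set ℕ).Nonempty := ⟨kk, hkkn, hn⟩
    have hmem := Nat.sSup_mem hne (hbdd n)
    exact ⟨le_csSup (hbdd n) ⟨hkkn, hn⟩, hmem.2⟩
  have hinv : ∀ kk n : ℕ, kk ≤ K n → (1 : ℝ) / (K n + 1) ≤ 1 / (kk + 1) := by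
    intro kk n hkk
    refine one_div_le_one_div_of_le (by positivity) ?_
    have : (kk : ℝ) ≤ K n := Nat.cast_le.mpr hkk
    linarith
  -- unitarity
  have hvv : star (mkSeq B ff) * mkSeq B ff = mkSeq B 1 := by
    rw [mkSeq_star, mkSeq_mul, mkSeq_eq_iff, mem_nullSeq,
      NormedAddCommGroup.tendsto_nhds_zero]
    intro ε hε
    obtain ⟨kk, hkk⟩ := exists_nat_one_div_lt hε
    filter_upwards [hev kk] with n hn
    have hQn := hN' (K n) n (le_trans (le_max_left _ _) hn.2)
    have hlt := hQn.1.1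
    have hcoe : (-(star ff * ff) + (1 : ℕ →ᵇ B)) n
        = -(star (g (K n) n) * g (K n) n - 1) := by
      simp [hffn]; abel
    rw [hcoe, norm_neg]
    exact lt_of_lt_of_le hlt (hinv kk n hn.1) |>.trans hkk
  have hvv' : mkSeq B ff * star (mkSeq B ff) = mkSeq B 1 := by
    rw [mkSeq_star, mkSeq_mul, mkSeq_eq_iff, mem_nullSeq,
      NormedAddCommGroup.tendsto_nhds_zero]
    intro ε hε
    obtain ⟨kk, hkk⟩ := exists_nat_one_div_lt hε
    filter_upwards [hev kk] with n hn
    have hQn := hN' (K n) n (le_trans (le_max_left _ _) hn.2)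
    have hlt := hQn.1.2
    have hcoe : (-(ff * star ff) + (1 : ℕ →ᵇ B)) n
        = -(g (K n) n * star (g (K n) n) - 1) := by
      simp [hffn]; abel
    rw [hcoe, norm_neg]
    exact lt_of_lt_of_le hlt (hinv kk n hn.1) |>.trans hkk
  -- equality on the dense sequence
  have hatom : ∀ m, star (mkSeq B ff) * φ (d m) * mkSeq B ff = ψ (d m) := by
    intro m
    rw [← hp m, ← hq m, mkSeq_star, mkSeq_mul, mkSeq_mul, mkSeq_eq_iff, mem_nullSeq,
      NormedAddCommGroup.tendsto_nhds_zero]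
    intro ε hε
    obtain ⟨kk0, hkk0⟩ := exists_nat_one_div_lt (half_pos hε)
    set kk := max kk0 m with hkk_def
    have hkkε : 2 * ((1 : ℝ) / (kk + 1)) < ε := by
      have h1 : (1 : ℝ) / (kk + 1) ≤ 1 / (kk0 + 1) := by
        refine one_div_le_one_div_of_le (by positivity) ?_
        have : (kk0 : ℝ) ≤ kk := Nat.cast_le.mpr (le_max_left _ _)
        linarith
      linarith
    filter_upwards [hev kk] with n hn
    have hQn := hN' (K n) n (le_trans (le_max_left _ _) hn.2)
    have hmmem : m ∈ Finset.range (K n + 1) :=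
      Finset.mem_range.mpr (Nat.lt_succ_of_le (le_trans (le_max_right kk0 m) hn.1))
    have h3 := hQn.2 m hmmem
    have hcoe : (-(star ff * p m * ff) + q m) n
        = -(star (g (K n) n) * p m n * g (K n) n - q m n) := by
      simp [hffn]; abel
    rw [hcoe, norm_neg]
    calc ‖star (g (K n) n) * p m n * g (K n) n - q m n‖
        < 2 * ((1 : ℝ) / (K n + 1)) := h3
    _ ≤ 2 * ((1 : ℝ) / (kk + 1)) := by
        have := hinv kk n hn.1; linarith
    _ < ε := hkkε
  -- extend by density
  refine ⟨mkSeq B ff, hvv, hvv', fun a => ?_⟩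
  set v : SeqAlgebra B := mkSeq B ff with hv_def
  obtain ⟨s, hs_mem, hs_lim⟩ := mem_closure_iff_seq_limit.mp (hd a)
  have hVj : ∀ j, star v * φ (s j) * v = ψ (s j) := by
    intro j
    obtain ⟨m, hm⟩ := hs_mem j
    rw [← hm]; exact hatom m
  have hφs : Tendsto (fun j => φ (s j)) atTop (nhds (φ a)) := (hφ.tendsto a).comp hs_lim
  have hψs : Tendsto (fun j => ψ (s j)) atTop (nhds (ψ a)) := (hψ.tendsto a).comp hs_lim
  have hφn : Tendsto (fun j => ‖φ (s j) - φ a‖) atTop (nhds 0) :=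
    tendsto_iff_norm_sub_tendsto_zero.mp hφs
  have hψn : Tendsto (fun j => ‖ψ (s j) - ψ a‖) atTop (nhds 0) :=
    tendsto_iff_norm_sub_tendsto_zero.mp hψs
  have hbnd : ∀ j, ‖star v * φ a * v - ψ a‖
      ≤ ‖star v‖ * ‖φ a - φ (s j)‖ * ‖v‖ + ‖ψ (s j) - ψ a‖ := by
    intro j
    have e1 : star v * φ a * v - ψ a
        = (star v * φ a * v - star v * φ (s j) * v) + (ψ (s j) - ψ a) := by
      rw [hVj j]; abel
    calc ‖star v * φ a * v - ψ a‖
        ≤ ‖star v * φ a * v - star v * φ (s j) * v‖ + ‖ψ (s j) - ψ a‖ := by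
          rw [e1]; exact norm_add_le _ _
    _ ≤ ‖star v‖ * ‖φ a - φ (s j)‖ * ‖v‖ + ‖ψ (s j) - ψ a‖ := by
        refine add_le_add ?_ le_rfl
        rw [seq_conj_sub]
        calc ‖star v * (φ a - φ (s j)) * v‖
            ≤ ‖star v * (φ a - φ (s j))‖ * ‖v‖ := seq_norm_mul_le _ _
        _ ≤ ‖star v‖ * ‖φ a - φ (s j)‖ * ‖v‖ :=
            mul_le_mul_of_nonneg_right (seq_norm_mul_le _ _) (norm_nonneg _)
  have hlim : Tendsto (fun j => ‖star v‖ * ‖φ a - φ (s j)‖ * ‖v‖ + ‖ψ (s j) - ψ a‖)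
      atTop (nhds 0) := by
    have h1 : Tendsto (fun j => ‖φ a - φ (s j)‖) atTop (nhds 0) := by
      simpa [norm_sub_rev] using hφn
    have h2 := ((h1.const_mul ‖star v‖).mul_const ‖v‖).add hψn
    simpa using h2
  have hz : ‖star v * φ a * v - ψ a‖ ≤ 0 :=
    ge_of_tendsto hlim (Filter.Eventually.of_forall hbnd)
  exact sub_eq_zero.mp (seq_eq_zero_of_norm (le_antisymm hz (norm_nonneg _)))
end

section
/- Let A and B be C*-algebras with A separable and B unital. Suppose φ: A → B_∞ is a *-homomorphism with the property that for every map η: ℕ → ℕ with lim_{k→∞} η(k) = ∞, the maps φ and η* ∘ φ are approximately unitarily equivalent with unitaries in B_∞. Let (φₙ): A → ∏_ℕ B be any (not necessarily linear) lift of φ. Then for every finite subset F ⊂ A, every ε > 0 and every m ∈ ℕ, there exists an integer k ≥ m such that for every integer n ≥ k there is a unitary u ∈ B with ‖u*φₙ(a)u − φ_k(a)‖ < ε for all a ∈ F. -/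
open Filter Topology BoundedContinuousFunction

universe u v

section UnitaryApprox

variable {B : Type u} [CStarAlgebra B] [Nontrivial B]

lemma spectrum_near_one {h : B} {δ : ℝ} (hd : ‖h - 1‖ ≤ δ) :
    ∀ t ∈ spectrum ℝ h, |t - 1| ≤ δ := by
  intro t ht
  have h1 : t - 1 ∈ spectrum ℝ (h - (algebraMap ℝ B) 1) := by
    rw [← spectrum.sub_singleton_eq]
    exact Set.sub_mem_sub ht rfl
  have := spectrum.norm_le_norm_of_mem h1
  simpa [Real.norm_eq_abs] using this.trans (by simpa using hd)

lemma cfc_two_sided_inv {a : B} (hsa : IsSelfAdjoint a)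
    (hsp : ∀ t ∈ spectrum ℝ a, (1:ℝ)/2 ≤ t) : ∃ z : B, z * a = 1 ∧ a * z = 1 := by
  have hc : ContinuousOn (fun t : ℝ => t⁻¹) (spectrum ℝ a) :=
    continuousOn_id.inv₀ fun t ht => by have := hsp t ht; positivity
  have hone : ∀ s : Set ℝ, (∀ t ∈ s, (1:ℝ)/2 ≤ t) → s.EqOn (fun t : ℝ => t⁻¹ * t) 1 :=
    fun s hs t ht => by have := hs t ht; simp only [Pi.one_apply]; field_simp
  refine ⟨cfc (fun t : ℝ => t⁻¹) a, ?_, ?_⟩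
  · calc cfc (fun t : ℝ => t⁻¹) a * a
        = cfc (fun t : ℝ => t⁻¹) a * cfc (fun t : ℝ => t) a := by rw [cfc_id' ℝ a hsa]
    _ = cfc (fun t : ℝ => t⁻¹ * t) a :=
        (cfc_mul (fun t : ℝ => t⁻¹) (fun t : ℝ => t) a hc continuousOn_id).symm
    _ = 1 := by
        rw [← cfc_const_one ℝ a hsa]
        refine cfc_congr fun t ht => ?_
        have := hsp t ht
        field_simp
  · calc a * cfc (fun t : ℝ => t⁻¹) a
        = cfc (fun t : ℝ => t) a * cfc (fun t : ℝ => t⁻¹) a := by rw [cfc_id' ℝ a hsa]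
    _ = cfc (fun t : ℝ => t * t⁻¹) a :=
        (cfc_mul (fun t : ℝ => t) (fun t : ℝ => t⁻¹) a continuousOn_id hc).symm
    _ = 1 := by
        rw [← cfc_const_one ℝ a hsa]
        refine cfc_congr fun t ht => ?_
        have := hsp t ht
        field_simp

lemma inv_sqrt_near_one {t δ : ℝ} (ht : (1:ℝ)/2 ≤ t) (hd : |t - 1| ≤ δ) :
    |(Real.sqrt t)⁻¹ - 1| ≤ 2 * δ := by
  set s := Real.sqrt t with hs
  have hss : s * s = t := Real.mul_self_sqrt (by linarith)
  have hs0 : 0 ≤ s := Real.sqrt_nonneg t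
  have hs7 : 7/10 ≤ s := by nlinarith
  have habs : |1 - s| * (1 + s) = |1 - t| := by
    rw [← abs_of_nonneg (show (0:ℝ) ≤ 1 + s by linarith), ← abs_mul]
    congr 1; nlinarith
  have h1s : |1 - s| ≤ δ := by
    have h1t : |1 - t| ≤ δ := by rwa [abs_sub_comm] at hd
    nlinarith [abs_nonneg (1 - s)]
  have hveq : s⁻¹ - 1 = (1 - s) / s := by field_simp
  rw [hveq, abs_div, abs_of_pos (by linarith : (0:ℝ) < s), div_le_iff₀ (by linarith)]
  nlinarith [abs_nonneg (1 - s), abs_nonneg (1 - t)]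

lemma exists_unitary_close {w : B} {δ : ℝ} (hδ0 : 0 ≤ δ) (hδ : δ ≤ 1/2)
    (h1 : ‖star w * w - 1‖ ≤ δ) (h2 : ‖w * star w - 1‖ ≤ δ) :
    ∃ u ∈ unitary B, ‖u - w‖ ≤ 4 * δ := by
  set h : B := star w * w with hh
  have hsa : IsSelfAdjoint h := IsSelfAdjoint.star_mul_self w
  have hsa' : IsSelfAdjoint (w * star w) := IsSelfAdjoint.mul_star_self w
  have hspec : ∀ t ∈ spectrum ℝ h, (1:ℝ)/2 ≤ t := fun t ht => by
    have := abs_le.mp (spectrum_near_one h1 t ht); linarith [this.1]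
  have hspec' : ∀ t ∈ spectrum ℝ (w * star w), (1:ℝ)/2 ≤ t := fun t ht => by
    have := abs_le.mp (spectrum_near_one h2 t ht); linarith [this.1]
  set f : ℝ → ℝ := fun t => (Real.sqrt t)⁻¹ with hf
  have hfc : ContinuousOn f (spectrum ℝ h) :=
    Real.continuous_sqrt.continuousOn.inv₀ fun t ht => by
      have := hspec t ht
      exact ne_of_gt (Real.sqrt_pos.2 (by linarith))
  set g : B := cfc f h with hg
  have hgsa : IsSelfAdjoint g := cfc_predicate f h
  -- g * h * g = 1
  have hghg : g * h * g = 1 := by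
    have e1 : g * h * g = cfc (fun t : ℝ => f t * t * f t) h := by
      calc g * h * g = cfc f h * cfc (fun t : ℝ => t) h * cfc f h := by
            rw [cfc_id' ℝ h hsa]
      _ = cfc (fun t : ℝ => f t * t) h * cfc f h :=
            congrArg (· * cfc f h)
              (cfc_mul f (fun t : ℝ => t) h hfc continuousOn_id).symm
      _ = cfc (fun t : ℝ => f t * t * f t) h :=
            (cfc_mul (fun t : ℝ => f t * t) f h (hfc.mul continuousOn_id) hfc).symm
    rw [e1, ← cfc_const_one ℝ h hsa]
    refine cfc_congr fun t ht => ?_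
    have ht2 := hspec t ht
    have hst : Real.sqrt t * Real.sqrt t = t := Real.mul_self_sqrt (by linarith)
    have hsp : (0:ℝ) < Real.sqrt t := Real.sqrt_pos.2 (by linarith)
    simp only [hf]
    field_simp
    rw [Real.sq_sqrt (by linarith)]
  -- inverses
  obtain ⟨z, hz1, hz2⟩ := cfc_two_sided_inv hsa hspec
  obtain ⟨z', hz1', hz2'⟩ := cfc_two_sided_inv hsa' hspec'
  -- w is a unit
  have hlw : (z * star w) * w = 1 := by rw [mul_assoc]; exact hz1
  have hwr : w * (star w * z') = 1 := by rw [← mul_assoc]; exact hz2'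
  have hlr : z * star w = star w * z' := by
    calc z * star w = (z * star w) * (w * (star w * z')) := by rw [hwr, mul_one]
    _ = ((z * star w) * w) * (star w * z') := by noncomm_ring
    _ = star w * z' := by rw [hlw, one_mul]
  have hwunit : IsUnit w := ⟨⟨w, z * star w, by rw [hlr]; exact hwr, hlw⟩, rfl⟩
  -- g is a unit
  have hgunit : IsUnit g := by
    have hsc : ContinuousOn Real.sqrt (spectrum ℝ h) := Real.continuous_sqrt.continuousOn
    have e2 : g * cfc Real.sqrt h = 1 := by
      rw [hg, ← cfc_mul _ _ h hfc hsc, ← cfc_const_one ℝ h hsa]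
      refine cfc_congr fun t ht => ?_
      have ht2 := hspec t ht
      have hsp : (0:ℝ) < Real.sqrt t := Real.sqrt_pos.2 (by linarith)
      simp only [hf]
      field_simp
    have e3 : cfc Real.sqrt h * g = 1 := by
      rw [hg, ← cfc_mul _ _ h hsc hfc, ← cfc_const_one ℝ h hsa]
      refine cfc_congr fun t ht => ?_
      have ht2 := hspec t ht
      have hsp : (0:ℝ) < Real.sqrt t := Real.sqrt_pos.2 (by linarith)
      simp only [hf]
      field_simp
    exact ⟨⟨g, cfc Real.sqrt h, e2, e3⟩, rfl⟩
  -- define u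
  refine ⟨w * g, ?_, ?_⟩
  · have hu1 : star (w * g) * (w * g) = 1 := by
      rw [star_mul, hgsa.star_eq]
      calc g * star w * (w * g) = g * (star w * w) * g := by noncomm_ring
      _ = 1 := hghg
    have huunit : IsUnit (w * g) := hwunit.mul hgunit
    obtain ⟨U, hU⟩ := huunit
    have hstar : star (w * g) = (↑U⁻¹ : B) := by
      calc star (w * g) = star (w * g) * ((w * g) * ↑U⁻¹) := by
            rw [← hU, U.mul_inv, mul_one]
      _ = (star (w * g) * (w * g)) * ↑U⁻¹ := by noncomm_ring
      _ = ↑U⁻¹ := by rw [hu1, one_mul]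
    have hu2 : (w * g) * star (w * g) = 1 := by rw [hstar, ← hU, U.mul_inv]
    exact Unitary.mem_iff.mpr ⟨hu1, hu2⟩
  · have hdiff : w * g - w = w * (g - 1) := by rw [mul_sub, mul_one]
    have hnw : ‖w‖ ≤ 2 := by
      have hcs : ‖w‖ * ‖w‖ = ‖h‖ := (CStarRing.norm_star_mul_self).symm
      have : ‖h‖ ≤ 3/2 := by
        have htri : ‖h‖ ≤ ‖h - 1‖ + ‖(1:B)‖ := by
          simpa using norm_add_le (h - 1) (1:B)
        rw [norm_one] at htri
        linarith
      nlinarith [norm_nonneg w]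
    have hg1 : ‖g - 1‖ ≤ 2 * δ := by
      have e4 : g - 1 = cfc (fun t : ℝ => f t - 1) h := by
        rw [cfc_sub _ _ h hfc (continuousOn_const), hg, cfc_const_one ℝ h hsa]
      rw [e4]
      refine norm_cfc_le (by linarith) fun t ht => ?_
      have hd := spectrum_near_one h1 t ht
      have ht2 := hspec t ht
      simpa [Real.norm_eq_abs, hf] using inv_sqrt_near_one ht2 hd
    calc ‖w * g - w‖ = ‖w * (g - 1)‖ := by rw [hdiff]
    _ ≤ ‖w‖ * ‖g - 1‖ := norm_mul_le _ _
    _ ≤ 2 * (2 * δ) := by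
        apply mul_le_mul hnw hg1 (norm_nonneg _) (by norm_num)
    _ = 4 * δ := by ring

end UnitaryApprox

set_option maxHeartbeats 1000000 in
open SeqAlg in
/-- Let `A` be separable, `B` unital, and `φ : A → B_∞` a
*-homomorphism such that for every `η : ℕ → ℕ` with `η(k) → ∞` the maps `φ` and `η* ∘ φ`
are approximately unitarily equivalent with unitaries in `B_∞`. Then for any lift
`(φₙ) : A → ∏_ℕ B` of `φ`, any finite `F ⊆ A`, `ε > 0` and `m ∈ ℕ`, there is `k ≥ m`
such that for every `n ≥ k` there is a unitary `u ∈ B` with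
`‖u* φₙ(a) u - φ_k(a)‖ < ε` for all `a ∈ F`. -/
theorem lift_local_unitary_conjugation
    {A : Type v} {B : Type u} [NonUnitalCStarAlgebra A] [CStarAlgebra B]
    [TopologicalSpace.SeparableSpace A]
    (φ : A → SeqAlgebra B)
    (hadd : ∀ x y : A, φ (x + y) = φ x + φ y)
    (hsmul : ∀ (c : ℂ) (x : A), φ (c • x) = c • φ x)
    (hmul : ∀ x y : A, φ (x * y) = φ x * φ y)
    (hstar : ∀ x : A, φ (star x) = star (φ x))
    (happrox : ∀ (η : ℕ → ℕ) (hη : Filter.Tendsto η Filter.atTop Filter.atTop),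
      ∀ (F : Finset A) (ε : ℝ), 0 < ε → ∃ u : SeqAlgebra B,
        star u * u = mkSeq B 1 ∧ u * star u = mkSeq B 1 ∧
        ∀ a ∈ F, ‖star u * φ a * u - etaStar B η hη (φ a)‖ < ε)
    (L : A → (ℕ →ᵇ B)) (hL : ∀ a : A, mkSeq B (L a) = φ a) :
    ∀ (F : Finset A) (ε : ℝ), 0 < ε → ∀ m : ℕ, ∃ k : ℕ, m ≤ k ∧
      ∀ n : ℕ, k ≤ n → ∃ u : B, u ∈ unitary B ∧
        ∀ a ∈ F, ‖star u * (L a) n * u - (L a) k‖ < ε := by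
  intro F ε hε m
  rcases subsingleton_or_nontrivial B with hB | hB
  · refine ⟨m, le_rfl, fun n hn => ⟨1, (unitary B).one_mem, fun a _ => ?_⟩⟩
    rw [Subsingleton.elim (star (1:B) * (L a) n * 1 - (L a) m) (0:B), norm_zero]
    exact hε
  by_contra hcon
  push_neg at hcon
  have hsel : ∀ k : ℕ, ∃ n, max m k ≤ n ∧ ∀ u, u ∈ unitary B → ∃ a ∈ F,
      ε ≤ ‖star u * (L a) n * u - (L a) (max m k)‖ :=
    fun k => hcon (max m k) (le_max_left m k)
  choose η hη1 hη2 using hsel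
  have hηt : Tendsto η atTop atTop :=
    tendsto_atTop_mono (fun k => le_trans (le_max_right m k) (hη1 k)) tendsto_id
  set M : ℝ := 1 + ∑ a ∈ F, ‖L a‖ with hM
  have hsum0 : (0:ℝ) ≤ ∑ a ∈ F, ‖L a‖ := Finset.sum_nonneg fun a _ => norm_nonneg _
  have hM1 : (1:ℝ) ≤ M := by simp only [hM]; linarith
  have hMpos : (0:ℝ) < M := by linarith
  have hMb : ∀ a ∈ F, ∀ j : ℕ, ‖(L a) j‖ ≤ M := by
    intro a ha j
    have h1 := (L a).norm_coe_le_norm j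
    have h2 : ‖L a‖ ≤ ∑ b ∈ F, ‖L b‖ :=
      Finset.single_le_sum (fun b _ => norm_nonneg (L b)) ha
    simp only [hM]; linarith
  set δ : ℝ := min (1/2) (ε / (16 * M)) with hδdef
  have hδ0 : 0 < δ := lt_min (by norm_num) (div_pos hε (by linarith))
  have hδhalf : δ ≤ 1/2 := min_le_left _ _
  have hδε : δ ≤ ε / (16 * M) := min_le_right _ _
  obtain ⟨v, hv1, hv2, hv3⟩ := happrox η hηt F (ε/4) (by positivity)
  obtain ⟨w, hw⟩ := Quotient.exists_rep v
  have hw' : mkSeq B w = v := hw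
  have hnull : ∀ f : ℕ →ᵇ B, mkSeq B f = mkSeq B 1 →
      Tendsto (fun n => f n - 1) atTop (nhds (0:B)) := by
    intro f hf
    have h1 : (-f + 1 : ℕ →ᵇ B) ∈ nullSeq B := mkSeq_eq_iff.mp hf
    have h2 : (f - 1 : ℕ →ᵇ B) ∈ nullSeq B := by
      have h2' := (nullSeq B).neg_mem h1
      have he : -(-f + 1 : ℕ →ᵇ B) = f - 1 := by abel
      rwa [he] at h2'
    have h3 : Tendsto (fun n => (f - 1 : ℕ →ᵇ B) n) atTop (nhds (0:B)) := by
      exact h2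
    simpa using h3
  have hsvv : mkSeq B (star w * w) = mkSeq B 1 := by
    rw [← mkSeq_mul, ← mkSeq_star, hw']; exact hv1
  have hvvs : mkSeq B (w * star w) = mkSeq B 1 := by
    rw [← mkSeq_mul, ← mkSeq_star, hw']; exact hv2
  have hev1 : ∀ᶠ n in atTop, ‖star (w n) * w n - 1‖ < δ := by
    have h4 := (hnull _ hsvv).norm.eventually_lt_const
      (show ‖(0:B)‖ < δ by rw [norm_zero]; exact hδ0)
    simpa using h4
  have hev2 : ∀ᶠ n in atTop, ‖w n * star (w n) - 1‖ < δ := by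
    have h4 := (hnull _ hvvs).norm.eventually_lt_const
      (show ‖(0:B)‖ < δ by rw [norm_zero]; exact hδ0)
    simpa using h4
  have hkey : ∀ a ∈ F, ∀ᶠ n in atTop,
      ‖star (w n) * (L a) n * w n - (L a) (η n)‖ < ε/4 := by
    intro a ha
    set e : ℕ →ᵇ B := (L a).compContinuous ⟨η, continuous_of_discreteTopology⟩ with he
    have hxa : star v * φ a * v = mkSeq B (star w * L a * w) := by
      rw [← hw', ← hL a, mkSeq_star, mkSeq_mul, mkSeq_mul]
    have heta : etaStar B η hηt (φ a) = mkSeq B e := by rw [← hL a]; rfl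
    have hlt : ‖mkSeq B (star w * L a * w - e)‖ < ε/4 := by
      have h5 : mkSeq B (star w * L a * w - e)
          = star v * φ a * v - etaStar B η hηt (φ a) := by
        rw [hxa, heta]; rfl
      rw [h5]; exact hv3 a ha
    obtain ⟨d, hd1, hd2⟩ := QuotientAddGroup.norm_lt_iff.mp hlt
    have hd1' : mkSeq B d = mkSeq B (star w * L a * w - e) := hd1
    have hs : (-d + (star w * L a * w - e) : ℕ →ᵇ B) ∈ nullSeq B := mkSeq_eq_iff.mp hd1'
    have hsT : Tendsto (fun n => (-d + (star w * L a * w - e) : ℕ →ᵇ B) n)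
        atTop (nhds (0:B)) := by
      exact hs
    have hevs : ∀ᶠ n in atTop,
        ‖(-d + (star w * L a * w - e) : ℕ →ᵇ B) n‖ < ε/4 - ‖d‖ :=
      hsT.norm.eventually_lt_const
        (show ‖(0:B)‖ < ε/4 - ‖d‖ by rw [norm_zero]; linarith)
    filter_upwards [hevs] with n hn
    have hdn : ‖d n‖ ≤ ‖d‖ := d.norm_coe_le_norm n
    have hrepr : star (w n) * (L a) n * w n - (L a) (η n)
        = d n + (-d + (star w * L a * w - e) : ℕ →ᵇ B) n := by
      simp [he]
    calc ‖star (w n) * (L a) n * w n - (L a) (η n)‖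
        = ‖d n + (-d + (star w * L a * w - e) : ℕ →ᵇ B) n‖ := by rw [hrepr]
    _ ≤ ‖d n‖ + ‖(-d + (star w * L a * w - e) : ℕ →ᵇ B) n‖ := norm_add_le _ _
    _ < ‖d‖ + (ε/4 - ‖d‖) := add_lt_add_of_le_of_lt hdn hn
    _ = ε/4 := by ring
  have hall : ∀ᶠ n in atTop, ∀ a ∈ F,
      ‖star (w n) * (L a) n * w n - (L a) (η n)‖ < ε/4 :=
    (eventually_all_finset F).mpr hkey
  obtain ⟨k, hka, hk1, hk2, hkm⟩ :=
    (hall.and (hev1.and (hev2.and (eventually_ge_atTop m)))).exists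
  obtain ⟨u₀, hu₀, hu₀w⟩ := exists_unitary_close hδ0.le hδhalf hk1.le hk2.le
  have hu₀n : ‖u₀‖ = 1 := CStarRing.norm_of_mem_unitary hu₀
  have hwk : ‖w k‖ ≤ 2 := by
    have hcs : ‖w k‖ * ‖w k‖ = ‖star (w k) * w k‖ := (CStarRing.norm_star_mul_self).symm
    have h6 : ‖star (w k) * w k‖ - ‖(1:B)‖ ≤ ‖star (w k) * w k - 1‖ :=
      norm_sub_norm_le _ _
    rw [norm_one] at h6
    nlinarith [norm_nonneg (w k), hk1.le]
  have hbad := hη2 k (star u₀) (Unitary.star_mem hu₀)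
  rw [max_eq_right hkm] at hbad
  obtain ⟨a, haF, hge⟩ := hbad
  rw [star_star] at hge
  set x : B := (L a) k with hx
  set y : B := (L a) (η k) with hy
  set c : B := star u₀ * x * u₀ with hc
  have hconj : u₀ * y * star u₀ - x = u₀ * (y - c) * star u₀ := by
    have h7 : u₀ * (y - c) * star u₀
        = u₀ * y * star u₀ - (u₀ * star u₀) * x * (u₀ * star u₀) := by
      simp only [hc]; noncomm_ring
    rw [h7, (Unitary.mem_iff.mp hu₀).2, one_mul, mul_one]
  have hnc : ‖u₀ * (y - c) * star u₀‖ ≤ ‖y - c‖ := by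
    calc ‖u₀ * (y - c) * star u₀‖ ≤ ‖u₀ * (y - c)‖ * ‖star u₀‖ := norm_mul_le _ _
    _ ≤ ‖u₀‖ * ‖y - c‖ * ‖star u₀‖ :=
        mul_le_mul_of_nonneg_right (norm_mul_le _ _) (norm_nonneg _)
    _ = ‖y - c‖ := by rw [norm_star, hu₀n]; ring
  have hsplit : star (w k) * x * w k - c
      = (star (w k) - star u₀) * (x * w k) + (star u₀ * x) * (w k - u₀) := by
    simp only [hc]; noncomm_ring
  have hterm1 : ‖(star (w k) - star u₀) * (x * w k)‖ ≤ 4*δ * (M * 2) := by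
    calc ‖(star (w k) - star u₀) * (x * w k)‖
        ≤ ‖star (w k) - star u₀‖ * ‖x * w k‖ := norm_mul_le _ _
    _ ≤ (4*δ) * (M * 2) := by
        apply mul_le_mul ?_ ?_ (norm_nonneg _) (by positivity)
        · rw [← star_sub, norm_star, norm_sub_rev]; exact hu₀w
        · calc ‖x * w k‖ ≤ ‖x‖ * ‖w k‖ := norm_mul_le _ _
          _ ≤ M * 2 := mul_le_mul (hMb a haF k) hwk (norm_nonneg _) (by linarith)
  have hterm2 : ‖(star u₀ * x) * (w k - u₀)‖ ≤ M * (4*δ) := by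
    calc ‖(star u₀ * x) * (w k - u₀)‖ ≤ ‖star u₀ * x‖ * ‖w k - u₀‖ := norm_mul_le _ _
    _ ≤ M * (4*δ) := by
        apply mul_le_mul ?_ ?_ (norm_nonneg _) (by positivity)
        · calc ‖star u₀ * x‖ ≤ ‖star u₀‖ * ‖x‖ := norm_mul_le _ _
          _ ≤ M := by rw [norm_star, hu₀n, one_mul]; exact hMb a haF k
        · rw [norm_sub_rev]; exact hu₀w
  have hchain : ‖u₀ * y * star u₀ - x‖ < ε := by
    calc ‖u₀ * y * star u₀ - x‖ = ‖u₀ * (y - c) * star u₀‖ := by rw [hconj]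
    _ ≤ ‖y - c‖ := hnc
    _ ≤ ‖y - star (w k) * x * w k‖ + ‖star (w k) * x * w k - c‖ := by
        simpa [dist_eq_norm] using dist_triangle y (star (w k) * x * w k) c
    _ < ε/4 + (4*δ*(M*2) + M*(4*δ)) := by
        apply add_lt_add_of_lt_of_le
        · rw [norm_sub_rev]; exact hka a haF
        · rw [hsplit]; exact (norm_add_le _ _).trans (add_le_add hterm1 hterm2)
    _ ≤ ε := by
        have h12 : (12:ℝ) * M * δ ≤ 12 * M * (ε/(16*M)) :=
          mul_le_mul_of_nonneg_left hδε (by positivity)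
        have h13 : 12 * M * (ε/(16*M)) = (3/4) * ε := by field_simp; ring
        nlinarith
  exact absurd hge (not_le.mpr hchain)
end
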